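/- arXiv:2101.06647 — 5 statements merged into one kernel-verified Lean document; each statement's English description precedes it below -/
import Mathlib

section
/- Let S and A be finite sets, s₁, s₂ : A → S two maps, μ : A → ℚ a function with μ(a) > 0 for every a ∈ A, and L a ℚ-vector space. Define ∂ : L^S → L^A by (∂φ)(a) = φ(s₂(a)) − φ(s₁(a)) and ∂^∨ : L^A → L^S by (∂^∨ψ)(s) = Σ_{a : s₁(a)=s} ψ(a) − Σ_{a : s₂(a)=s} ψ(a). Then the map N_μ : Ker(∂^∨) → Coker(∂), sending ψ ∈ Ker(∂^∨) to the class in Coker(∂) of the function a ↦ μ(a)·ψ(a), is a bijection. -/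
/-!
Statement 0: Let `S` and `A` be finite sets, `s₁ s₂ : A → S`, `μ : A → ℚ` with
`μ a > 0`, and `L` a `ℚ`-vector space.  With `∂ : L^S → L^A` given by
`(∂φ) a = φ (s₂ a) - φ (s₁ a)` and `∂^∨ : L^A → L^S` given by
`(∂^∨ψ) s = ∑_{s₁ a = s} ψ a - ∑_{s₂ a = s} ψ a`, the monodromy map
`N_μ : Ker ∂^∨ → Coker ∂`, `ψ ↦ [a ↦ μ a • ψ a]`, is a bijection.
-/

open Finset

/-- The boundary map `∂ : L^S → L^A`, `(∂ φ) a = φ (s₂ a) - φ (s₁ a)`. -/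
def graphBoundary {S A : Type*} (L : Type*) [AddCommGroup L] [Module ℚ L]
    (s₁ s₂ : A → S) : (S → L) →ₗ[ℚ] (A → L) where
  toFun φ := fun a => φ (s₂ a) - φ (s₁ a)
  map_add' φ χ := by
    funext a
    simp only [Pi.add_apply]
    abel
  map_smul' c φ := by
    funext a
    simp only [Pi.smul_apply, RingHom.id_apply, smul_sub]

/-- The dual map `∂^∨ : L^A → L^S`,
`(∂^∨ ψ) s = ∑_{a : s₁ a = s} ψ a - ∑_{a : s₂ a = s} ψ a`. -/
def graphCoboundary {S A : Type*} (L : Type*) [AddCommGroup L] [Module ℚ L]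
    [Fintype A] [DecidableEq S] (s₁ s₂ : A → S) : (A → L) →ₗ[ℚ] (S → L) where
  toFun ψ := fun s => (∑ a ∈ univ.filter (fun a => s₁ a = s), ψ a) -
      ∑ a ∈ univ.filter (fun a => s₂ a = s), ψ a
  map_add' ψ χ := by
    funext s
    simp only [Pi.add_apply, Finset.sum_add_distrib]
    abel
  map_smul' c ψ := by
    funext s
    simp only [Pi.smul_apply, RingHom.id_apply, smul_sub, Finset.smul_sum]

/-- Multiplication by the edge lengths: `ψ ↦ (a ↦ μ a • ψ a)`. -/
def muScale {A : Type*} (L : Type*) [AddCommGroup L] [Module ℚ L] (μ : A → ℚ) :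
    (A → L) →ₗ[ℚ] (A → L) where
  toFun ψ := fun a => μ a • ψ a
  map_add' ψ χ := by
    funext a
    simp [smul_add]
  map_smul' c ψ := by
    funext a
    simp only [Pi.smul_apply, RingHom.id_apply]
    rw [smul_comm]


section MyAux

set_option linter.unusedSectionVars false

variable {S A : Type*} [Fintype S] [Fintype A] [DecidableEq S]

lemma my_fib (t : A → S) (f : S → ℚ) (g : A → ℚ) :
    ∑ a, g a * f (t a) = ∑ s, (∑ a ∈ univ.filter (fun a => t a = s), g a) * f s := by
  rw [← Finset.sum_fiberwise univ t (fun a => g a * f (t a))]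
  refine Finset.sum_congr rfl fun s _ => ?_
  rw [Finset.sum_mul]
  exact Finset.sum_congr rfl fun a ha => by rw [(Finset.mem_filter.1 ha).2]

lemma my_inj_rat (s₁ s₂ : A → S) (μ : A → ℚ) (hμ : ∀ a, 0 < μ a)
    (ψ : A → ℚ) (φ : S → ℚ)
    (hker : ∀ s, (∑ a ∈ univ.filter (fun a => s₁ a = s), ψ a) =
        ∑ a ∈ univ.filter (fun a => s₂ a = s), ψ a)
    (heq : ∀ a, μ a * ψ a = φ (s₂ a) - φ (s₁ a)) : ψ = 0 := by
  have hsum : ∑ a, μ a * ψ a * ψ a = 0 := by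
    have : ∑ a, μ a * ψ a * ψ a = ∑ a, ψ a * (φ (s₂ a) - φ (s₁ a)) := by
      refine Finset.sum_congr rfl fun a _ => ?_
      rw [← heq a]; ring
    rw [this]
    simp only [mul_sub]
    rw [Finset.sum_sub_distrib, my_fib s₂ φ ψ, my_fib s₁ φ ψ, ← Finset.sum_sub_distrib]
    refine Finset.sum_eq_zero fun s _ => ?_
    rw [hker s]; ring
  have hzero : ∀ a ∈ univ, μ a * ψ a * ψ a = 0 := by
    rw [← Finset.sum_eq_zero_iff_of_nonneg]
    · exact hsum
    · intro a _; nlinarith [hμ a, mul_self_nonneg (ψ a)]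
  funext a
  have := hzero a (mem_univ a)
  simp only [Pi.zero_apply]
  rcases mul_eq_zero.1 this with h | h
  · rcases mul_eq_zero.1 h with h' | h'
    · exact absurd h' (hμ a).ne'
    · exact h'
  · exact h

/-- General injectivity core via duality. -/
lemma my_inj (L : Type*) [AddCommGroup L] [Module ℚ L]
    (s₁ s₂ : A → S) (μ : A → ℚ) (hμ : ∀ a, 0 < μ a)
    (ψ : A → L) (φ : S → L)
    (hker : graphCoboundary L s₁ s₂ ψ = 0)
    (heq : muScale L μ ψ = graphBoundary L s₁ s₂ φ) : ψ = 0 := by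
  funext a
  show ψ a = 0
  rw [← Module.forall_dual_apply_eq_zero_iff ℚ (ψ a)]
  intro f
  have key : (fun a => f (ψ a)) = 0 := by
    refine my_inj_rat s₁ s₂ μ hμ _ (fun s => f (φ s)) ?_ ?_
    · intro s
      have h := congrFun hker s
      simp only [graphCoboundary, LinearMap.coe_mk, AddHom.coe_mk, Pi.zero_apply] at h
      have h2 := congrArg f (sub_eq_zero.1 h)
      simpa only [map_sum] using h2
    · intro a
      have h := congrFun heq a
      simp only [muScale, graphBoundary, LinearMap.coe_mk, AddHom.coe_mk] at h
      have h2 := congrArg f h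
      simpa only [map_smul, map_sub, smul_eq_mul] using h2
  exact congrFun key a

/-- Incidence matrix of `∂`. -/
def myMat (s₁ s₂ : A → S) : Matrix A S ℚ :=
  Matrix.of fun a s => (if s₂ a = s then (1 : ℚ) else 0) - (if s₁ a = s then 1 else 0)

lemma my_toLin_boundary (s₁ s₂ : A → S) :
    Matrix.toLin' (myMat s₁ s₂) = graphBoundary ℚ s₁ s₂ := by
  refine LinearMap.ext fun φ => funext fun a => ?_
  simp only [Matrix.toLin'_apply, Matrix.mulVec, dotProduct, myMat, Matrix.of_apply,
    graphBoundary, LinearMap.coe_mk, AddHom.coe_mk, sub_mul, one_mul, ite_mul, zero_mul,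
    Finset.sum_sub_distrib, Finset.sum_ite_eq, mem_univ, if_true]

lemma my_toLin_coboundary [DecidableEq A] (s₁ s₂ : A → S) :
    Matrix.toLin' (myMat s₁ s₂).transpose = -graphCoboundary ℚ s₁ s₂ := by
  refine LinearMap.ext fun ψ => funext fun s => ?_
  simp only [Matrix.toLin'_apply, Matrix.mulVec, dotProduct, myMat, Matrix.transpose_apply,
    Matrix.of_apply, graphCoboundary, LinearMap.coe_mk, AddHom.coe_mk, LinearMap.neg_apply,
    Pi.neg_apply, sub_mul, one_mul, ite_mul, zero_mul, Finset.sum_sub_distrib, neg_sub,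
    Finset.sum_filter]

lemma my_finrank_eq [DecidableEq A] (s₁ s₂ : A → S) :
    Module.finrank ℚ (LinearMap.range (graphBoundary (S := S) (A := A) ℚ s₁ s₂)) =
    Module.finrank ℚ (LinearMap.range (graphCoboundary (S := S) (A := A) ℚ s₁ s₂)) := by
  classical
  have h1 : (myMat s₁ s₂).rank =
      Module.finrank ℚ (LinearMap.range (graphBoundary (S := S) (A := A) ℚ s₁ s₂)) := by
    rw [Matrix.rank, ← Matrix.toLin'_apply', my_toLin_boundary]
  have h2 : (myMat s₁ s₂).transpose.rank =
      Module.finrank ℚ (LinearMap.range (graphCoboundary (S := S) (A := A) ℚ s₁ s₂)) := by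
    rw [Matrix.rank, ← Matrix.toLin'_apply', my_toLin_coboundary, LinearMap.range_neg]
  rw [← h1, ← h2, Matrix.rank_transpose]


lemma my_F_injective (L : Type*) [AddCommGroup L] [Module ℚ L]
    (s₁ s₂ : A → S) (μ : A → ℚ) (hμ : ∀ a, 0 < μ a) :
    Function.Injective
      ((LinearMap.range (graphBoundary L s₁ s₂)).mkQ ∘ₗ
        muScale L μ ∘ₗ (LinearMap.ker (graphCoboundary L s₁ s₂)).subtype) := by
  rw [← LinearMap.ker_eq_bot]
  refine (Submodule.eq_bot_iff _).2 fun x hx => ?_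
  have hx' : (LinearMap.range (graphBoundary L s₁ s₂)).mkQ (muScale L μ x.val) = 0 := hx
  rw [Submodule.mkQ_apply, Submodule.Quotient.mk_eq_zero] at hx'
  obtain ⟨φ, hφ⟩ := hx'
  have : (x : A → L) = 0 := my_inj L s₁ s₂ μ hμ x.val φ x.2 hφ.symm
  exact Subtype.ext this

lemma my_F_surjective_rat [DecidableEq A] (s₁ s₂ : A → S) (μ : A → ℚ) (hμ : ∀ a, 0 < μ a) :
    Function.Surjective
      ((LinearMap.range (graphBoundary ℚ s₁ s₂)).mkQ ∘ₗ
        muScale ℚ μ ∘ₗ (LinearMap.ker (graphCoboundary ℚ s₁ s₂)).subtype) := by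
  have h1 := LinearMap.finrank_range_add_finrank_ker (graphCoboundary (S := S) (A := A) ℚ s₁ s₂)
  have h2 := Submodule.finrank_quotient_add_finrank
    (LinearMap.range (graphBoundary (S := S) (A := A) ℚ s₁ s₂))
  have h3 := my_finrank_eq s₁ s₂
  have H : Module.finrank ℚ (LinearMap.ker (graphCoboundary (S := S) (A := A) ℚ s₁ s₂)) =
      Module.finrank ℚ ((A → ℚ) ⧸ LinearMap.range (graphBoundary (S := S) (A := A) ℚ s₁ s₂)) := by
    omega
  exact (LinearMap.injective_iff_surjective_of_finrank_eq_finrank H).1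
    (my_F_injective ℚ s₁ s₂ μ hμ)

lemma my_single_mem [DecidableEq A] (L : Type*) [AddCommGroup L] [Module ℚ L]
    (s₁ s₂ : A → S) (μ : A → ℚ) (hμ : ∀ a, 0 < μ a) (b : A) (v : L) :
    Pi.single b v ∈ (LinearMap.range (graphBoundary L s₁ s₂)) ⊔
      (LinearMap.ker (graphCoboundary L s₁ s₂)).map (muScale L μ) := by
  -- solve the rational problem for `Pi.single b 1`
  obtain ⟨x, hx⟩ := my_F_surjective_rat s₁ s₂ μ hμ
    ((LinearMap.range (graphBoundary ℚ s₁ s₂)).mkQ (Pi.single b 1))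
  simp only [LinearMap.comp_apply, Submodule.subtype_apply, Submodule.mkQ_apply,
    Submodule.Quotient.eq] at hx
  obtain ⟨φ₀, hφ₀⟩ := hx
  set ψ₀ : A → ℚ := x.val with hψ₀def
  have hψ₀ker : graphCoboundary ℚ s₁ s₂ ψ₀ = 0 := x.2
  -- pointwise identity over ℚ
  have hpt : ∀ a, (Pi.single b (1 : ℚ) : A → ℚ) a = μ a * ψ₀ a - (φ₀ (s₂ a) - φ₀ (s₁ a)) := by
    intro a
    have h := congrFun hφ₀ a
    simp only [muScale, graphBoundary, LinearMap.coe_mk, AddHom.coe_mk, Pi.sub_apply,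
      smul_eq_mul] at h
    linarith
  -- lift to L
  refine Submodule.mem_sup.2 ⟨graphBoundary L s₁ s₂ (fun s => (-φ₀ s) • v),
    ⟨_, rfl⟩, muScale L μ (fun a => ψ₀ a • v), ?_, ?_⟩
  · refine Submodule.mem_map.2 ⟨_, ?_, rfl⟩
    refine LinearMap.mem_ker.2 ?_
    funext s
    have h := congrFun hψ₀ker s
    simp only [graphCoboundary, LinearMap.coe_mk, AddHom.coe_mk, Pi.zero_apply] at h ⊢
    rw [← Finset.sum_smul, ← Finset.sum_smul, ← sub_smul, sub_eq_zero.1 h, sub_self, zero_smul]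
  · funext a
    simp only [graphBoundary, muScale, LinearMap.coe_mk, AddHom.coe_mk, Pi.add_apply]
    have h := hpt a
    have hs : (Pi.single b v : A → L) a = ((Pi.single b (1:ℚ) : A → ℚ) a) • v := by
      rw [Pi.single_apply, Pi.single_apply, ite_smul, one_smul, zero_smul]
    rw [hs]
    match_scalars
    linear_combination -h

theorem monodromy_bijective' (L : Type*) [AddCommGroup L] [Module ℚ L]
    (s₁ s₂ : A → S) (μ : A → ℚ) (hμ : ∀ a, 0 < μ a) :
    Function.Bijective
      ((LinearMap.range (graphBoundary L s₁ s₂)).mkQ ∘ₗ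
        muScale L μ ∘ₗ (LinearMap.ker (graphCoboundary L s₁ s₂)).subtype) := by
  classical
  refine ⟨my_F_injective L s₁ s₂ μ hμ, ?_⟩
  intro y
  obtain ⟨χ, rfl⟩ := Submodule.mkQ_surjective _ y
  have hχ : χ ∈ (LinearMap.range (graphBoundary L s₁ s₂)) ⊔
      (LinearMap.ker (graphCoboundary L s₁ s₂)).map (muScale L μ) := by
    rw [← Finset.univ_sum_single χ]
    exact Submodule.sum_mem _ fun b _ => my_single_mem L s₁ s₂ μ hμ b (χ b)
  obtain ⟨u, hu, w, hw, huw⟩ := Submodule.mem_sup.1 hχ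
  obtain ⟨ψ, hψker, rfl⟩ := Submodule.mem_map.1 hw
  refine ⟨⟨ψ, hψker⟩, ?_⟩
  simp only [LinearMap.comp_apply, Submodule.subtype_apply, Submodule.mkQ_apply]
  rw [← huw, Submodule.Quotient.mk_add, (Submodule.Quotient.mk_eq_zero _).2 hu, zero_add]

end MyAux

/-- The monodromy operator `N_μ : Ker ∂^∨ → Coker ∂` of a compact metrized graph
is a bijection. -/
theorem monodromy_bijective {S A : Type*} [Fintype S] [Fintype A] [DecidableEq S]
    (L : Type*) [AddCommGroup L] [Module ℚ L]
    (s₁ s₂ : A → S) (μ : A → ℚ) (hμ : ∀ a, 0 < μ a) :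
    Function.Bijective
      ((LinearMap.range (graphBoundary L s₁ s₂)).mkQ ∘ₗ
        muScale L μ ∘ₗ (LinearMap.ker (graphCoboundary L s₁ s₂)).subtype) := by
  exact monodromy_bijective' L s₁ s₂ μ hμ
end

section
/- Let α ∈ O_C with 0 < v_p(α) < ∞, let Λ_α = O_C[[T₁,T₂]]/(T₁T₂ − α), let M = (Λ_α[1/p])^× be the group of units, and let ℓ be a prime number different from p. Let deg : M → ℤ be the group homomorphism sending a unit u to the integer k appearing in its unique factorization u = c·T₁^k·u₊·u₋ (with c ∈ C^×, u₊ ∈ 1 + T₁·O_C[[T₁]], u₋ ∈ 1 + T₂·O_C[[T₂]]). Then the maps M/M^{ℓⁿ} → ℤ/ℓⁿℤ induced by deg yield, in the inverse limit, a group isomorphism lim_n M/M^{ℓⁿ} ≅ lim_n ℤ/ℓⁿℤ = ℤ_ℓ. -/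
/-!
Statement 6: `C` is an algebraically closed field, complete for a valuation
`v_p` with `v_p(p) = 1` and `v_p(C^×) = ℚ` (encoded via the norm
`‖x‖ = p^{-v_p(x)}`), `O_C` its valuation ring.  For `α ∈ O_C` with
`0 < v_p α < ∞`, let `Λ_α = O_C[[T₁,T₂]]/(T₁T₂ - α)`, let
`M = (Λ_α[1/p])^×`, and let `ℓ ≠ p` be prime.  Let `deg : M → ℤ` be the group
homomorphism sending a unit `u` to the integer `k` appearing in its unique
factorization `u = c·T₁^k·u₊·u₋` (`c ∈ C^×`, `u₊ ∈ 1 + T₁·O_C[[T₁]]`,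
`u₋ ∈ 1 + T₂·O_C[[T₂]]`).  Then the maps `M/M^{ℓⁿ} → ℤ/ℓⁿℤ` induced by `deg`
yield, in the inverse limit, a group isomorphism
`lim_n M/M^{ℓⁿ} ≅ lim_n ℤ/ℓⁿℤ = ℤ_ℓ`.  The bijectivity of the induced map of
inverse limits is expressed elementwise: elements of `lim_n M/M^{ℓⁿ}` are
represented by sequences `u : ℕ → M` with `u (n+1) ≡ u n mod M^{ℓⁿ}`, such an
element is trivial iff `u n ∈ M^{ℓⁿ}` for all `n`, and elements of
`ℤ_ℓ = lim_n ℤ/ℓⁿℤ` are represented by sequences `k : ℕ → ℤ` with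
`ℓⁿ ∣ k (n+1) - k n`.
-/

/-- The valuation ring `O_C` (closed unit ball) of an ultrametric normed field. -/
def UnitBall (C : Type*) [NormedField C] [IsUltrametricDist C] : Subring C where
  carrier := {x | ‖x‖ ≤ 1}
  one_mem' := by simp
  mul_mem' := by
    intro a b ha hb
    simp only [Set.mem_setOf_eq] at *
    calc ‖a * b‖ = ‖a‖ * ‖b‖ := norm_mul a b
    _ ≤ 1 := by nlinarith [norm_nonneg a, norm_nonneg b]
  add_mem' := by
    intro a b ha hb
    simp only [Set.mem_setOf_eq] at *
    exact le_trans (IsUltrametricDist.norm_add_le_max a b) (max_le ha hb)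
  zero_mem' := by simp
  neg_mem' := by
    intro a ha
    simpa using ha

/-- The ring `Λ_α = O_C[[T₁,T₂]]/(T₁T₂ - α)`. -/
abbrev JambeRing (C : Type*) [NormedField C] [IsUltrametricDist C]
    (α : UnitBall C) : Type _ :=
  MvPowerSeries (Fin 2) (UnitBall C) ⧸
    Ideal.span {(MvPowerSeries.X 0 : MvPowerSeries (Fin 2) (UnitBall C)) *
      MvPowerSeries.X 1 - MvPowerSeries.C (σ := Fin 2) (R := UnitBall C) α}

/-- The ring `Λ_α[1/p]`. -/
abbrev JambeLoc (p : ℕ) (C : Type*) [NormedField C] [IsUltrametricDist C]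
    (α : UnitBall C) : Type _ :=
  Localization.Away ((p : JambeRing C α))

/-- The canonical map `O_C[[T₁,T₂]] → Λ_α[1/p]`. -/
noncomputable def jambeMap (p : ℕ) (C : Type*) [NormedField C] [IsUltrametricDist C]
    (α : UnitBall C) : MvPowerSeries (Fin 2) (UnitBall C) →+* JambeLoc p C α :=
  (algebraMap (JambeRing C α) (JambeLoc p C α)).comp (Ideal.Quotient.mk _)

/-- `c` belongs to `C^×` viewed inside `Λ_α[1/p]`. -/
def MemCstar (p : ℕ) (C : Type*) [NormedField C] [IsUltrametricDist C]
    (α : UnitBall C) (c : JambeLoc p C α) : Prop :=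
  ∃ (a : UnitBall C) (s : ℕ), (a : C) ≠ 0 ∧
    (p : JambeLoc p C α) ^ s * c =
      jambeMap p C α (MvPowerSeries.C (σ := Fin 2) (R := UnitBall C) a)

/-- `x` belongs to `1 + T_i·O_C[[T_i]]` viewed inside `Λ_α[1/p]`. -/
def MemOneAddT (p : ℕ) (C : Type*) [NormedField C] [IsUltrametricDist C]
    (α : UnitBall C) (i : Fin 2) (x : JambeLoc p C α) : Prop :=
  ∃ g : MvPowerSeries (Fin 2) (UnitBall C),
    MvPowerSeries.coeff (R := UnitBall C) 0 g = 1 ∧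
    (∀ d : Fin 2 →₀ ℕ, (∃ j, j ≠ i ∧ d j ≠ 0) →
      MvPowerSeries.coeff (R := UnitBall C) d g = 0) ∧
    x = jambeMap p C α g

/-!
Every unit `u` of `Λ_α[1/p]` factors as `c · T₁^(deg u) · u₊ · u₋`. Since `C` is algebraically
closed, `c` has roots of every order, and since `ℓ` is prime to `p` it is a unit of `O_C`, so
`u₊` and `u₋` have `ℓⁿ`-th roots by Hensel's lemma in the complete ring `O_C[[T₁,T₂]]`. Hence
`u` is an `ℓⁿ`-th power as soon as `ℓⁿ ∣ deg u`, which is injectivity. Surjectivity comes from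
the powers of `T₁`, once `deg T₁ = 1` is known: evaluating `T₁ = c · T₁^d · u₊ · u₋` at a point
`(x, α/x)` of the annulus `|α| < |x| < 1`, where `|u₊| = |u₋| = 1`, gives `|x|^(1-d) = |c|`, and
two different radii force `d = 1`.
-/

theorem IsUltrametricDist.isLinearTopology_of_norm_le_one {R : Type*} [SeminormedRing R]
    [IsUltrametricDist R] (h : ∀ x : R, ‖x‖ ≤ 1) : IsLinearTopology R R := by
  let ballIdeal (ε : ℝ) (hε : 0 < ε) : Ideal R :=
    { carrier := Metric.ball 0 ε
      add_mem' := fun {x y} hx hy => by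
        simp only [mem_ball_zero_iff] at hx hy ⊢
        exact (IsUltrametricDist.norm_add_le_max x y).trans_lt (max_lt hx hy)
      zero_mem' := Metric.mem_ball_self hε
      smul_mem' := fun r x hx => by
        simp only [mem_ball_zero_iff, smul_eq_mul] at hx ⊢
        exact (norm_mul_le r x).trans_lt (by nlinarith [h r, norm_nonneg x, norm_nonneg r]) }
  refine isLinearTopology_iff_hasBasis_ideal.mpr (Metric.nhds_basis_ball.to_hasBasis ?_ ?_)
  · intro ε hε
    exact ⟨ballIdeal ε hε, Metric.isOpen_ball.mem_nhds (Metric.mem_ball_self hε), subset_rfl⟩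
  · intro I hI
    obtain ⟨ε, hε, hball⟩ := Metric.mem_nhds_iff.mp hI
    exact ⟨ε, hε, hball⟩

theorem norm_natCast_eq_one_of_coprime {K : Type*} [NormedField K] [IsUltrametricDist K]
    {ℓ p : ℕ} (h : ℓ.Coprime p) (hp : ‖(p : K)‖ < 1) : ‖(ℓ : K)‖ = 1 := by
  obtain ⟨a, b, hab⟩ := Nat.isCoprime_iff_coprime.mpr h
  have hab' : (a : K) * ℓ + (b : K) * p = 1 := by
    exact_mod_cast congrArg (Int.cast : ℤ → K) hab
  refine le_antisymm (IsUltrametricDist.norm_natCast_le_one K ℓ) (not_lt.mp fun hℓ => ?_)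
  have hmax := IsUltrametricDist.norm_add_le_max ((a : K) * ℓ) ((b : K) * p)
  rw [hab', norm_one, norm_mul, norm_mul] at hmax
  have ha := IsUltrametricDist.norm_intCast_le_one K a
  have hb := IsUltrametricDist.norm_intCast_le_one K b
  rcases le_max_iff.mp hmax with h1 | h1 <;>
    nlinarith [norm_nonneg (a : K), norm_nonneg (b : K), norm_nonneg (ℓ : K), norm_nonneg (p : K)]

theorem map_units_zpow {F A K : Type*} [Monoid A] [DivisionMonoid K] [FunLike F A K]
    [MonoidHomClass F A K] (f : F) (u : Aˣ) (n : ℤ) : f ↑(u ^ n) = f ↑u ^ n := by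
  have h := congrArg Units.val (map_zpow (Units.map (f : A →* K)) u n)
  rwa [Units.val_zpow_eq_zpow_val, Units.coe_map, Units.coe_map] at h

theorem apply_zpow_eq_mul_of_map_mul {G : Type*} [Group G] {f : G → ℤ}
    (hf : ∀ a b, f (a * b) = f a + f b) (g : G) (z : ℤ) : f (g ^ z) = z * f g := by
  let F : G →* Multiplicative ℤ :=
    MonoidHom.mk' (fun g => Multiplicative.ofAdd (f g)) (fun a b => by rw [hf]; rfl)
  simpa [F] using congrArg Multiplicative.toAdd (map_zpow F g z)

theorem exists_pow_eq_of_pow_mul_eq {M : Type*} [CommMonoid M] {q s : ℕ} {P c : M} (hq : q ≠ 0)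
    (hP : IsUnit P) (hPq : ∃ π, π ^ q = P) (hc : ∃ b, b ^ q = P ^ s * c) : ∃ w, w ^ q = c := by
  obtain ⟨π, rfl⟩ := hPq
  obtain ⟨b, hb⟩ := hc
  obtain ⟨v, rfl⟩ := (isUnit_pow_iff hq).mp hP
  have hv : (v⁻¹ ^ s) ^ q * (v ^ q) ^ s = 1 := by
    rw [← pow_mul, ← pow_mul, mul_comm s q, inv_pow, inv_mul_cancel]
  refine ⟨↑(v⁻¹ ^ s) * b, ?_⟩
  rw [mul_pow, hb, ← mul_assoc, ← Units.val_pow_eq_pow_val, ← Units.val_pow_eq_pow_val,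
    ← Units.val_pow_eq_pow_val, ← Units.val_mul, hv, Units.val_one, one_mul]

theorem Units.exists_eq_pow_of_pow_eq {M : Type*} [CommMonoid M] {q : ℕ} (hq : q ≠ 0) {u : Mˣ}
    {w : M} (h : w ^ q = u) : ∃ v : Mˣ, u = v ^ q := by
  obtain ⟨v, rfl⟩ := (isUnit_pow_iff hq).mp (h ▸ u.isUnit)
  exact ⟨v, Units.ext (by simp [h])⟩

theorem HenselianRing.exists_pow_eq_of_sub_one_mem {R : Type*} [CommRing R] {I : Ideal R}
    [HenselianRing R I] {q : ℕ} (hq : IsUnit (q : R)) {f : R} (hf : f - 1 ∈ I) :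
    ∃ g : R, g ^ q = f := by
  rcases eq_or_ne q 0 with rfl | hq0
  · have : Subsingleton R := subsingleton_of_zero_eq_one (isUnit_zero_iff.mp (by simpa using hq))
    exact ⟨0, Subsingleton.elim _ _⟩
  -- `1` is a simple root of `X ^ q - f` modulo `I`, because `q` is a unit
  obtain ⟨g, hg, -⟩ := HenselianRing.is_henselian (I := I) (Polynomial.X ^ q - Polynomial.C f)
    (Polynomial.monic_X_pow_sub_C f hq0) 1 (by simpa using I.neg_mem hf)
    (by simpa [Polynomial.derivative_X_pow] using hq.map (Ideal.Quotient.mk I))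
  exact ⟨g, by simpa [sub_eq_zero] using hg⟩

namespace MvPowerSeries

theorem X_dvd_sub_one {σ R : Type*} [CommRing R] {i : σ} {g : MvPowerSeries σ R}
    (h0 : coeff 0 g = 1) (h : ∀ d : σ →₀ ℕ, (∃ j, j ≠ i ∧ d j ≠ 0) → coeff d g = 0) :
    X i ∣ g - 1 := by
  classical
  refine X_dvd_iff.mpr fun d hd => ?_
  rcases eq_or_ne d 0 with rfl | hd0
  · rw [map_sub, h0, coeff_zero_one, sub_self]
  · obtain ⟨j, hj⟩ := Finsupp.ne_iff.mp hd0
    have hji : j ≠ i := fun e => hj (e ▸ hd)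
    simp [h d ⟨j, hji, hj⟩, coeff_one, hd0]

theorem hasEval_of_norm_lt_one {σ R : Type*} [Finite σ] [SeminormedCommRing R]
    {a : σ → R} (ha : ∀ s, ‖a s‖ < 1) : HasEval a :=
  ⟨fun s => tendsto_pow_atTop_nhds_zero_of_norm_lt_one (ha s),
    by rw [Filter.cofinite_eq_bot]; exact Filter.tendsto_bot⟩

end MvPowerSeries

namespace UnitBall

variable {C : Type*} [NormedField C] [IsUltrametricDist C]

theorem norm_le_one (x : UnitBall C) : ‖x‖ ≤ 1 := x.2

theorem isUnit_iff_norm_eq_one {x : UnitBall C} : IsUnit x ↔ ‖x‖ = 1 := by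
  constructor
  · rintro ⟨u, rfl⟩
    have h : ‖(u : UnitBall C)‖ * ‖((u⁻¹ : (UnitBall C)ˣ) : UnitBall C)‖ = 1 := by
      rw [← norm_mul, u.mul_inv, norm_one]
    nlinarith [norm_le_one (u : UnitBall C), norm_le_one ((u⁻¹ : (UnitBall C)ˣ) : UnitBall C),
      norm_nonneg (u : UnitBall C), norm_nonneg ((u⁻¹ : (UnitBall C)ˣ) : UnitBall C)]
  · intro h
    have hx0 : (x : C) ≠ 0 := fun h0 => by
      rw [show ‖x‖ = ‖(x : C)‖ from rfl, h0, norm_zero] at h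
      exact zero_ne_one h
    have hinv : (x : C)⁻¹ ∈ UnitBall C := by
      show ‖(x : C)⁻¹‖ ≤ 1
      rw [norm_inv, show ‖(x : C)‖ = ‖x‖ from rfl, h, inv_one]
    exact IsUnit.of_mul_eq_one (a := x) ⟨_, hinv⟩ (Subtype.ext (mul_inv_cancel₀ hx0))

theorem isUnit_natCast_of_coprime {ℓ p : ℕ} (h : ℓ.Coprime p) (hp : ‖(p : C)‖ < 1) :
    IsUnit (ℓ : UnitBall C) :=
  isUnit_iff_norm_eq_one.mpr (norm_natCast_eq_one_of_coprime h hp)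

theorem exists_pow_eq [IsAlgClosed C] (a : UnitBall C) {q : ℕ} (hq : q ≠ 0) :
    ∃ b : UnitBall C, b ^ q = a := by
  obtain ⟨z, hz⟩ := IsAlgClosed.exists_pow_nat_eq (a : C) (Nat.pos_of_ne_zero hq)
  have hz1 : ‖z‖ ≤ 1 :=
    (pow_le_one_iff_of_nonneg (norm_nonneg z) hq).mp (by rw [← norm_pow, hz]; exact a.2)
  exact ⟨⟨z, hz1⟩, Subtype.ext (by simpa using hz)⟩

instance [CompleteSpace C] : CompleteSpace (UnitBall C) :=
  (isClosed_le continuous_norm continuous_const).isComplete.completeSpace_coe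

instance : IsLinearTopology (UnitBall C) (UnitBall C) :=
  IsUltrametricDist.isLinearTopology_of_norm_le_one norm_le_one

section Evaluation

open MvPowerSeries

variable [CompleteSpace C] {x y : UnitBall C} (hx : ‖x‖ < 1) (hy : ‖y‖ < 1)

noncomputable def evalAt : MvPowerSeries (Fin 2) (UnitBall C) →+* UnitBall C :=
  eval₂Hom (φ := RingHom.id _) continuous_id
    (hasEval_of_norm_lt_one (a := ![x, y]) (fun i => by fin_cases i <;> assumption))

theorem evalAt_X_zero : evalAt hx hy (X 0) = x := by
  simp [evalAt, coe_eval₂Hom]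

theorem evalAt_X_one : evalAt hx hy (X 1) = y := by
  simp [evalAt, coe_eval₂Hom]

theorem evalAt_C (a : UnitBall C) : evalAt hx hy (MvPowerSeries.C a) = a := by
  simp [evalAt, coe_eval₂Hom]

end Evaluation

end UnitBall

section JambeEval

variable {p : ℕ} {C : Type*} [NormedField C] [IsUltrametricDist C] [CompleteSpace C]
  {α : UnitBall C} {x y : UnitBall C} (hx : ‖x‖ < 1) (hy : ‖y‖ < 1) (hp : (p : C) ≠ 0)
  (hxy : x * y = α)

noncomputable def jambeEval : JambeLoc p C α →+* C :=
  IsLocalization.Away.lift (p : JambeRing C α)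
    (g := Ideal.Quotient.lift _ ((UnitBall C).subtype.comp (UnitBall.evalAt hx hy))
      (fun f hf => by
        obtain ⟨w, rfl⟩ := Ideal.mem_span_singleton'.mp hf
        simp [UnitBall.evalAt_X_zero, UnitBall.evalAt_X_one, UnitBall.evalAt_C, hxy]))
    (by simpa using hp)

theorem jambeEval_jambeMap (f : MvPowerSeries (Fin 2) (UnitBall C)) :
    jambeEval hx hy hp hxy (jambeMap p C α f) = UnitBall.evalAt hx hy f := by
  simp [jambeEval, jambeMap, IsLocalization.Away.lift_eq]

theorem norm_jambeEval_of_memOneAddT {i : Fin 2} {u : JambeLoc p C α}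
    (hu : MemOneAddT p C α i u) : ‖jambeEval hx hy hp hxy u‖ = 1 := by
  obtain ⟨g, hg0, -, rfl⟩ := hu
  have hg : IsUnit g := MvPowerSeries.isUnit_iff_constantCoeff.mpr
    (by simp [← MvPowerSeries.coeff_zero_eq_constantCoeff_apply, hg0])
  rw [jambeEval_jambeMap]
  exact UnitBall.isUnit_iff_norm_eq_one.mp (hg.map _)

theorem jambeEval_eq_div_of_pow_mul_eq {s : ℕ} {a : UnitBall C} {c : JambeLoc p C α}
    (hc : (p : JambeLoc p C α) ^ s * c = jambeMap p C α (MvPowerSeries.C a)) :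
    jambeEval hx hy hp hxy c = a / (p : C) ^ s := by
  have h := congrArg (jambeEval hx hy hp hxy) hc
  rw [map_mul, map_pow, map_natCast, jambeEval_jambeMap, UnitBall.evalAt_C] at h
  exact eq_div_of_mul_eq (pow_ne_zero s hp) (by rw [mul_comm, h])

include hx hy hp hxy in
theorem norm_zpow_one_sub_eq_of_eq_mul_zpow (hα0 : (α : C) ≠ 0) {t : (JambeLoc p C α)ˣ}
    (ht : (t : JambeLoc p C α) = jambeMap p C α (MvPowerSeries.X 0)) {d : ℤ} {s : ℕ}
    {a : UnitBall C} {c up um : JambeLoc p C α}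
    (hc : (p : JambeLoc p C α) ^ s * c = jambeMap p C α (MvPowerSeries.C a))
    (hup : MemOneAddT p C α 0 up) (hum : MemOneAddT p C α 1 um)
    (h : (t : JambeLoc p C α) = c * ↑(t ^ d) * up * um) :
    ‖x‖ ^ (1 - d) = ‖(a : C) / (p : C) ^ s‖ := by
  have hx0 : ‖x‖ ≠ 0 := by
    rintro hx0
    rw [norm_eq_zero.mp hx0, zero_mul] at hxy
    exact hα0 (by rw [← hxy]; rfl)
  have hΦ := congrArg (fun u => ‖jambeEval hx hy hp hxy u‖) h
  simp only [map_mul] at hΦ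
  rw [map_units_zpow, ht, jambeEval_jambeMap, UnitBall.evalAt_X_zero,
    jambeEval_eq_div_of_pow_mul_eq hx hy hp hxy hc, norm_mul, norm_mul, norm_mul,
    norm_jambeEval_of_memOneAddT hx hy hp hxy hup, norm_jambeEval_of_memOneAddT hx hy hp hxy hum,
    norm_zpow, mul_one, mul_one] at hΦ
  change ‖x‖ = ‖(a : C) / (p : C) ^ s‖ * ‖x‖ ^ d at hΦ
  rw [zpow_sub₀ hx0, zpow_one, div_eq_iff (zpow_ne_zero d hx0)]
  exact hΦ

end JambeEval

section Jambe

variable {p : ℕ} {C : Type*} [NormedField C] [IsUltrametricDist C] {α : UnitBall C}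

theorem MemOneAddT.exists_pow_eq {q : ℕ} (hq : IsUnit (q : UnitBall C)) {i : Fin 2}
    {u : JambeLoc p C α} (hu : MemOneAddT p C α i u) : ∃ w, w ^ q = u := by
  obtain ⟨g, hg0, hg, rfl⟩ := hu
  obtain ⟨k, hk⟩ := MvPowerSeries.X_dvd_sub_one hg0 hg
  have hmem : g - 1 ∈ Ideal.span (Set.range (MvPowerSeries.X (σ := Fin 2) (R := UnitBall C))) :=
    hk ▸ Ideal.mul_mem_right _ _ (Ideal.subset_span ⟨i, rfl⟩)
  obtain ⟨h, hh⟩ := HenselianRing.exists_pow_eq_of_sub_one_mem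
    (by simpa using hq.map (MvPowerSeries.C (σ := Fin 2))) hmem
  exact ⟨jambeMap p C α h, by rw [← map_pow, hh]⟩

theorem MemCstar.exists_pow_eq [IsAlgClosed C] {q : ℕ} (hq : q ≠ 0) {c : JambeLoc p C α}
    (hc : MemCstar p C α c) : ∃ w, w ^ q = c := by
  obtain ⟨a, s, -, hc⟩ := hc
  refine exists_pow_eq_of_pow_mul_eq hq (P := (p : JambeLoc p C α)) (s := s) ?_ ?_ ?_
  · simpa using IsLocalization.Away.algebraMap_isUnit (S := JambeLoc p C α) (p : JambeRing C α)
  · obtain ⟨π, hπ⟩ := UnitBall.exists_pow_eq (p : UnitBall C) hq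
    exact ⟨jambeMap p C α (MvPowerSeries.C π),
      by rw [← map_pow, ← map_pow, hπ, map_natCast, map_natCast]⟩
  · obtain ⟨b, hb⟩ := UnitBall.exists_pow_eq a hq
    exact ⟨jambeMap p C α (MvPowerSeries.C b), by rw [hc, ← map_pow, ← map_pow, hb]⟩

variable [IsAlgClosed C] {t : (JambeLoc p C α)ˣ} {c up um : JambeLoc p C α}

theorem exists_eq_pow_of_eq_mul_zpow {q : ℕ} (hq : IsUnit (q : UnitBall C))
    (hc : MemCstar p C α c) (hup : MemOneAddT p C α 0 up) (hum : MemOneAddT p C α 1 um)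
    {u : (JambeLoc p C α)ˣ} {k : ℤ}
    (hu : (u : JambeLoc p C α) = c * ↑(t ^ ((q : ℤ) * k)) * up * um) :
    ∃ w : (JambeLoc p C α)ˣ, u = w ^ q := by
  have hq0 : q ≠ 0 := by rintro rfl; simp at hq
  obtain ⟨wc, hwc⟩ := hc.exists_pow_eq hq0
  obtain ⟨wup, hwup⟩ := hup.exists_pow_eq hq
  obtain ⟨wum, hwum⟩ := hum.exists_pow_eq hq
  refine Units.exists_eq_pow_of_pow_eq hq0 (w := wc * ↑(t ^ k) * wup * wum) ?_
  rw [hu, mul_comm (q : ℤ) k, zpow_mul, zpow_natCast, Units.val_pow_eq_pow_val, mul_pow, mul_pow,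
    mul_pow, hwc, hwup, hwum]

theorem eq_one_of_eq_mul_zpow [CompleteSpace C] (hp : (p : C) ≠ 0) (hα0 : (α : C) ≠ 0)
    (hα1 : ‖(α : C)‖ < 1) (ht : (t : JambeLoc p C α) = jambeMap p C α (MvPowerSeries.X 0))
    (hc : MemCstar p C α c) (hup : MemOneAddT p C α 0 up) (hum : MemOneAddT p C α 1 um)
    {d : ℤ} (h : (t : JambeLoc p C α) = c * ↑(t ^ d) * up * um) : d = 1 := by
  obtain ⟨a, s, -, hc⟩ := hc
  obtain ⟨σ, hσ⟩ := UnitBall.exists_pow_eq α (q := 6) (by norm_num)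
  have hσ6 : ‖σ‖ ^ 6 = ‖α‖ := by rw [← norm_pow, hσ]
  have hσ0 : 0 < ‖σ‖ := by
    refine (norm_nonneg σ).lt_of_ne fun h0 => hα0 (norm_eq_zero.mp ?_)
    change ‖α‖ = 0
    rw [← hσ6, ← h0, zero_pow (by norm_num)]
  have hσ1 : ‖σ‖ < 1 :=
    (pow_lt_one_iff_of_nonneg (norm_nonneg σ) (n := 6) (by norm_num)).mp (by rw [hσ6]; exact hα1)
  have hlt {k : ℕ} (hk : k ≠ 0) : ‖σ ^ k‖ < 1 := by
    rw [norm_pow]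
    exact pow_lt_one₀ hσ0.le hσ1 hk
  -- the two points `(σ³, σ³)` and `(σ², σ⁴)` of the annulus have different radii
  have h3 := norm_zpow_one_sub_eq_of_eq_mul_zpow (hlt three_ne_zero) (hlt three_ne_zero) hp
    (by rw [← pow_add, hσ]) hα0 ht hc hup hum h
  have h2 := norm_zpow_one_sub_eq_of_eq_mul_zpow (hlt two_ne_zero) (hlt four_ne_zero) hp
    (by rw [← pow_add, hσ]) hα0 ht hc hup hum h
  set ρ := ‖σ‖ ^ (1 - d) with hρ
  have hρ32 : ρ ^ 3 = ρ ^ 2 := by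
    rw [hρ, ← zpow_natCast, ← zpow_natCast, ← zpow_mul, ← zpow_mul, mul_comm, zpow_mul,
      mul_comm (1 - d), zpow_mul, zpow_natCast, zpow_natCast, ← norm_pow, ← norm_pow, h3, h2]
  have hρ1 : ρ = 1 := by
    rw [pow_succ] at hρ32
    exact mul_left_cancel₀ (pow_ne_zero 2 (zpow_ne_zero _ hσ0.ne'))
      (hρ32.trans (mul_one _).symm)
  have := (zpow_eq_one_iff_right₀ hσ0.le hσ1.ne).mp hρ1
  omega

end Jambe

theorem jambe_symbols_ladic_general (p ℓ : ℕ) (hp : p.Prime) (hℓ : ℓ.Prime) (hℓp : ℓ ≠ p)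
    (C : Type*) [NontriviallyNormedField C] [IsAlgClosed C] [CompleteSpace C]
    [IsUltrametricDist C]
    (hnorm : ‖(p : C)‖ = (p : ℝ)⁻¹)
    -- `0 < v_p α < ∞`:
    (α : UnitBall C) (hα0 : (α : C) ≠ 0) (hα1 : ‖(α : C)‖ < 1)
    -- `T₁` as a unit of `Λ_α[1/p]`:
    (t₁ : (JambeLoc p C α)ˣ)
    (ht₁ : (t₁ : JambeLoc p C α) = jambeMap p C α (MvPowerSeries.X 0))
    -- `deg : M → ℤ` is a group homomorphism,
    (deg : (JambeLoc p C α)ˣ → ℤ)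
    (hdeg_hom : ∀ u v : (JambeLoc p C α)ˣ, deg (u * v) = deg u + deg v)
    -- sending `u` to the integer `k` in its unique factorization
    -- `u = c·T₁^k·u₊·u₋`:
    (hdeg_fact : ∀ u : (JambeLoc p C α)ˣ,
      ∃ c up um : JambeLoc p C α,
        (MemCstar p C α c ∧ MemOneAddT p C α 0 up ∧ MemOneAddT p C α 1 um) ∧
        (u : JambeLoc p C α) =
          c * ((t₁ ^ deg u : (JambeLoc p C α)ˣ) : JambeLoc p C α) * up * um) :
    -- injectivity of the induced map `lim_n M/M^{ℓⁿ} → lim_n ℤ/ℓⁿℤ`: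
    (∀ u : ℕ → (JambeLoc p C α)ˣ,
      (∀ n, ∃ w : (JambeLoc p C α)ˣ, u (n + 1) = u n * w ^ (ℓ ^ n)) →
      (∀ n, (ℓ : ℤ) ^ n ∣ deg (u n)) →
      ∀ n, ∃ w : (JambeLoc p C α)ˣ, u n = w ^ (ℓ ^ n)) ∧
    -- surjectivity of the induced map onto `lim_n ℤ/ℓⁿℤ = ℤ_ℓ`:
    (∀ k : ℕ → ℤ, (∀ n, (ℓ : ℤ) ^ n ∣ k (n + 1) - k n) →
      ∃ u : ℕ → (JambeLoc p C α)ˣ,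
        (∀ n, ∃ w : (JambeLoc p C α)ˣ, u (n + 1) = u n * w ^ (ℓ ^ n)) ∧
        ∀ n, (ℓ : ℤ) ^ n ∣ deg (u n) - k n) := by
  have hp1 : ‖(p : C)‖ < 1 := by
    rw [hnorm]
    exact inv_lt_one_of_one_lt₀ (by exact_mod_cast hp.one_lt)
  have hp0 : (p : C) ≠ 0 :=
    norm_pos_iff.mp (by rw [hnorm]; exact inv_pos.mpr (by exact_mod_cast hp.pos))
  have hℓunit (n : ℕ) : IsUnit ((ℓ ^ n : ℕ) : UnitBall C) := by
    rw [Nat.cast_pow]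
    exact (UnitBall.isUnit_natCast_of_coprime ((Nat.coprime_primes hℓ hp).mpr hℓp) hp1).pow n
  have hdeg_t₁ : deg t₁ = 1 := by
    obtain ⟨c, up, um, ⟨hc, hup, hum⟩, h⟩ := hdeg_fact t₁
    exact eq_one_of_eq_mul_zpow hp0 hα0 hα1 ht₁ hc hup hum h
  refine ⟨fun u _ hdvd n => ?_, fun k hk => ⟨fun n => t₁ ^ k n, fun n => ?_, fun n => ?_⟩⟩
  · obtain ⟨k, hk⟩ := hdvd n
    obtain ⟨c, up, um, ⟨hc, hup, hum⟩, hu⟩ := hdeg_fact (u n)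
    exact exists_eq_pow_of_eq_mul_zpow (hℓunit n) hc hup hum (by rwa [hk, ← Nat.cast_pow] at hu)
  · obtain ⟨j, hj⟩ := hk n
    refine ⟨t₁ ^ j, ?_⟩
    have hkn : k (n + 1) = k n + j * (ℓ ^ n : ℕ) := by push_cast; linarith
    simp only [hkn, zpow_add, zpow_mul, zpow_natCast]
  · rw [apply_zpow_eq_mul_of_map_mul hdeg_hom, hdeg_t₁, mul_one, sub_self]
    exact dvd_zero _

theorem jambe_symbols_ladic (p ℓ : ℕ) (hp : p.Prime) (hℓ : ℓ.Prime) (hℓp : ℓ ≠ p)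
    (C : Type*) [NontriviallyNormedField C] [IsAlgClosed C] [CompleteSpace C]
    [IsUltrametricDist C]
    (hnorm : ‖(p : C)‖ = (p : ℝ)⁻¹)
    (hval : ∀ x : C, x ≠ 0 → ∃ q : ℚ, ‖x‖ = (p : ℝ) ^ (-(q : ℝ)))
    (hval' : ∀ q : ℚ, ∃ x : C, x ≠ 0 ∧ ‖x‖ = (p : ℝ) ^ (-(q : ℝ)))
    -- `0 < v_p α < ∞`:
    (α : UnitBall C) (hα0 : (α : C) ≠ 0) (hα1 : ‖(α : C)‖ < 1)
    -- `T₁` as a unit of `Λ_α[1/p]`: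
    (t₁ : (JambeLoc p C α)ˣ)
    (ht₁ : (t₁ : JambeLoc p C α) = jambeMap p C α (MvPowerSeries.X 0))
    -- `deg : M → ℤ` is a group homomorphism,
    (deg : (JambeLoc p C α)ˣ → ℤ)
    (hdeg_hom : ∀ u v : (JambeLoc p C α)ˣ, deg (u * v) = deg u + deg v)
    -- sending `u` to the integer `k` in its unique factorization
    -- `u = c·T₁^k·u₊·u₋`:
    (hdeg_fact : ∀ u : (JambeLoc p C α)ˣ,
      ∃ c up um : JambeLoc p C α,
        (MemCstar p C α c ∧ MemOneAddT p C α 0 up ∧ MemOneAddT p C α 1 um) ∧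
        (u : JambeLoc p C α) =
          c * ((t₁ ^ deg u : (JambeLoc p C α)ˣ) : JambeLoc p C α) * up * um) :
    -- injectivity of the induced map `lim_n M/M^{ℓⁿ} → lim_n ℤ/ℓⁿℤ`:
    (∀ u : ℕ → (JambeLoc p C α)ˣ,
      (∀ n, ∃ w : (JambeLoc p C α)ˣ, u (n + 1) = u n * w ^ (ℓ ^ n)) →
      (∀ n, (ℓ : ℤ) ^ n ∣ deg (u n)) →
      ∀ n, ∃ w : (JambeLoc p C α)ˣ, u n = w ^ (ℓ ^ n)) ∧
    -- surjectivity of the induced map onto `lim_n ℤ/ℓⁿℤ = ℤ_ℓ`: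
    (∀ k : ℕ → ℤ, (∀ n, (ℓ : ℤ) ^ n ∣ k (n + 1) - k n) →
      ∃ u : ℕ → (JambeLoc p C α)ˣ,
        (∀ n, ∃ w : (JambeLoc p C α)ˣ, u (n + 1) = u n * w ^ (ℓ ^ n)) ∧
        ∀ n, (ℓ : ℤ) ^ n ∣ deg (u n) - k n) :=
  jambe_symbols_ladic_general p ℓ hp hℓ hℓp C hnorm α hα0 hα1 t₁ ht₁ deg hdeg_hom hdeg_fact
end

section
/- Let p be a prime number, k a perfect field of characteristic p, W = W(k) the ring of p-typical Witt vectors of k, and σ : W → W its Frobenius automorphism. Let (a_n)_{n≥0} and (b_n)_{n≥0} be two sequences in W such that b_n = Σ_{j=0}^{n} p^j · σ^{n−j}(a_j) for every n ≥ 0, and such that both sequences tend to 0 p-adically (for every m there is N such that a_n ∈ p^m W and b_n ∈ p^m W for all n ≥ N). Then b_n ∈ p^{n+1} W for every n ≥ 0, and moreover for every m there is N such that b_n ∈ p^{n+1+m} W for all n ≥ N (i.e. b_n/p^{n+1} tends to 0 p-adically). -/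
/-!
Applying `σ^(N-n)` to `bₙ` gives the first `n+1` terms of `b_N`, so
`σ^(N-n)(bₙ) = b_N - ∑_{n<j≤N} p^j σ^(N-j)(a_j)`. For `N` large the right side is divisible by
`p^(n+1+m)` as soon as all `a_j` with `j > n` are divisible by `p^m`, and since `σ` is an
automorphism fixing `p`, divisibility by powers of `p` passes back from `σ^(N-n)(bₙ)` to `bₙ`.
-/

open Finset

namespace RingAut

variable {R : Type*} [CommRing R] (σ : RingAut R)

theorem pow_apply_of_apply_eq {x : R} (hx : σ x = x) (t : ℕ) : (σ ^ t) x = x := by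
  rw [coe_pow]
  exact Function.iterate_fixed hx t

theorem dvd_pow_apply_iff {d : R} (hd : σ d = d) (t : ℕ) {x : R} :
    d ∣ (σ ^ t) x ↔ d ∣ x := by
  simpa only [pow_apply_of_apply_eq σ hd] using map_dvd_iff (σ ^ t) (a := d) (b := x)

variable (π : R)

def twistedSum (a : ℕ → R) (n : ℕ) : R :=
  ∑ j ∈ range (n + 1), π ^ j * (σ ^ (n - j)) (a j)

variable {σ π} {a : ℕ → R}

theorem twistedSum_eq_pow_apply_add (hπ : σ π = π) {n N : ℕ} (hnN : n ≤ N) :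
    twistedSum σ π a N = (σ ^ (N - n)) (twistedSum σ π a n) +
      ∑ j ∈ Ico (n + 1) (N + 1), π ^ j * (σ ^ (N - j)) (a j) := by
  rw [twistedSum, twistedSum, ← sum_range_add_sum_Ico _ (by omega : n + 1 ≤ N + 1), map_sum]
  congr 1
  refine sum_congr rfl fun j hj => ?_
  rw [map_mul, map_pow, pow_apply_of_apply_eq σ hπ, ← mul_apply, ← pow_add,
    show N - n + (n - j) = N - j by grind]

theorem pow_dvd_twistedSum_of_pow_dvd (hπ : σ π = π) {n m N : ℕ} (hnN : n ≤ N)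
    (ha : ∀ j, n < j → π ^ m ∣ a j) (hbN : π ^ (n + 1 + m) ∣ twistedSum σ π a N) :
    π ^ (n + 1 + m) ∣ twistedSum σ π a n := by
  have hfix : σ (π ^ (n + 1 + m)) = π ^ (n + 1 + m) := by rw [map_pow, hπ]
  rw [← dvd_pow_apply_iff σ hfix (N - n),
    eq_sub_of_add_eq (twistedSum_eq_pow_apply_add hπ hnN).symm]
  refine dvd_sub hbN (dvd_sum fun j hj => ?_)
  have hj : n + 1 ≤ j := (mem_Ico.mp hj).1
  rw [pow_add]
  exact mul_dvd_mul (pow_dvd_pow π hj)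
    ((dvd_pow_apply_iff σ (by rw [map_pow, hπ]) _).mpr (ha j hj))

theorem pow_dvd_twistedSum (hπ : σ π = π)
    (hb : ∀ m : ℕ, ∃ N, ∀ n ≥ N, π ^ m ∣ twistedSum σ π a n) {n m : ℕ}
    (ha : ∀ j, n < j → π ^ m ∣ a j) :
    π ^ (n + 1 + m) ∣ twistedSum σ π a n := by
  obtain ⟨N, hN⟩ := hb (n + 1 + m)
  exact pow_dvd_twistedSum_of_pow_dvd hπ (le_max_right N n) ha (hN _ (le_max_left N n))

end RingAut

theorem witt_vector_division_lemma (p : ℕ) [Fact p.Prime]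
    (k : Type*) [Field k] [CharP k p] [PerfectRing k p]
    (a b : ℕ → WittVector p k)
    (hab : ∀ n, b n = ∑ j ∈ Finset.range (n + 1),
      (p : WittVector p k) ^ j *
        (fun x : WittVector p k => WittVector.frobenius x)^[n - j] (a j))
    (ha : ∀ m : ℕ, ∃ N, ∀ n ≥ N, (p : WittVector p k) ^ m ∣ a n)
    (hb : ∀ m : ℕ, ∃ N, ∀ n ≥ N, (p : WittVector p k) ^ m ∣ b n) :
    (∀ n, (p : WittVector p k) ^ (n + 1) ∣ b n) ∧
      ∀ m : ℕ, ∃ N, ∀ n ≥ N, (p : WittVector p k) ^ (n + 1 + m) ∣ b n := by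
  set σ : RingAut (WittVector p k) := WittVector.frobeniusEquiv p k
  have hσp : σ p = p := map_natCast σ p
  obtain rfl : b = RingAut.twistedSum σ p a := funext fun n => by
    simp only [hab n, RingAut.twistedSum, RingAut.coe_pow]
    rfl
  refine ⟨fun n => ?_, fun m => ?_⟩
  · simpa using RingAut.pow_dvd_twistedSum hσp hb (m := 0) (n := n) fun _ _ => by simp
  · obtain ⟨N, hN⟩ := ha m
    exact ⟨N, fun n hn => RingAut.pow_dvd_twistedSum hσp hb fun j hj => hN j (by omega)⟩
end

section
/- Let p be a prime, k an algebraically closed field of characteristic p, W = W(k) the ring of p-typical Witt vectors with Frobenius automorphism σ. Let A = W⟨X₁,…,X_r⟩/I be a quotient of a restricted power series ring over W by an ideal, φ : A → A a ring endomorphism with φ(ι(w)) = ι(σ(w)) for w ∈ W and φ(a) ≡ a^p (mod pA), M a finitely generated, p-adically separated and complete A-module, ψ : M → M an additive map with ψ(φ(a)·x) = a·ψ(x), and M^♯ the unique W-submodule of M which is finitely generated over W, stable under ψ with ψ bijective on it, and such that for all x ∈ M and κ ≥ 1, ψⁿ(x) ∈ M^♯ + p^κ M for n large. Suppose moreover given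 an additive map φ_M : M → M with ψ ∘ φ_M = id_M. Then every x ∈ M can be written in a unique way as x = c₀ + Σ_{i≥1} φ_M^{i−1}(c_i), where c₀ ∈ M^♯, ψ(c_i) = 0 for every i ≥ 1, and c_i → 0 p-adically; here the series converges in the p-adic topology of M, i.e. x − (c₀ + Σ_{i=1}^{N} φ_M^{i−1}(c_i)) → 0 p-adically as N → ∞. -/
/-- The ring `W⟨X₁,…,X_r⟩` of restricted power series: power series whose
coefficients tend to `0` `p`-adically. -/
def RestrictedPS (p : ℕ) (W : Type*) [CommRing W] (r : ℕ) :
    Subalgebra W (MvPowerSeries (Fin r) W) where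
  carrier := {f | ∀ m : ℕ,
    {d : Fin r →₀ ℕ | ¬ (p : W) ^ m ∣ MvPowerSeries.coeff d f}.Finite}
  add_mem' := by
    intro a b ha hb m
    refine ((ha m).union (hb m)).subset ?_
    intro d hd
    by_contra h
    simp only [Set.mem_union, Set.mem_setOf_eq, not_or, not_not] at h
    exact hd (by simpa [map_add] using dvd_add h.1 h.2)
  mul_mem' := by
    intro a b ha hb m
    refine (Set.Finite.image2 (· + ·) (ha m) (hb m)).subset ?_
    intro d hd
    simp only [Set.mem_setOf_eq] at hd
    by_contra hno
    apply hd
    rw [MvPowerSeries.coeff_mul]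
    refine Finset.dvd_sum ?_
    rintro ⟨d₁, d₂⟩ hmem
    have hd12 : d₁ + d₂ = d := Finset.HasAntidiagonal.mem_antidiagonal.mp hmem
    by_cases h1 : (p : W) ^ m ∣ MvPowerSeries.coeff d₁ a
    · exact h1.mul_right _
    · by_cases h2 : (p : W) ^ m ∣ MvPowerSeries.coeff d₂ b
      · exact h2.mul_left _
      · exact absurd (hd12 ▸ Set.mem_image2_of_mem h1 h2) hno
  algebraMap_mem' := by
    intro w m
    refine (Set.finite_singleton 0).subset ?_
    intro d hd
    simp only [Set.mem_setOf_eq] at hd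
    simp only [Set.mem_singleton_iff]
    by_contra h0
    exact hd (by simp [MvPowerSeries.algebraMap_apply, MvPowerSeries.coeff_C, h0])

/-!
Put `x' = x - c₀`. If `ψⁿ x' → 0` `p`-adically, the digits `c_{n+1} = ψⁿ x' - φ_M ψⁿ⁺¹ x'`
lie in `ker ψ` and tend to `0`, and the partial sums telescope:
`x - (c₀ + ∑_{i=1}^m φ_M^{i-1} c_i) = φ_M^m ψ^m x'`.

Such a `c₀ ∈ M♯` exists. Since `ψ` is a surjective `σ⁻¹`-semilinear endomorphism of the
Noetherian `W`-module `M♯`, it is injective modulo any `ψ`-stable submodule, so an element of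
`M♯` lies in `p^κ M` as soon as some `ψⁿ` of it does. Hence the elements `e_κ ∈ M♯` with
`ψⁿ (x - e_κ) ∈ p^κ M` for large `n` form a Cauchy sequence, and by Chevalley's lemma
(`W` is a complete DVR) the topology that `M` induces on `M♯` is its `p`-adic one, so they
converge in `M♯` to the required `c₀`.

Uniqueness: for a decomposition of `0`, `ψ^m` of the `m`-th partial sum is `ψ^m c₀`, which
forces `c₀ = 0` by the same injectivity; then `c_j = T - φ_M ψ T` with `T` the image under
`ψ^{j-1}` of a partial sum, so every `c_j` is `p`-adically `0`.
-/

open IsLocalRing Filter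

section LocalRing

variable {R V : Type*} [CommRing R] [AddCommGroup V] [Module R V]

theorem Submodule.comap_eq_self_of_surjective [IsNoetherian R V] {τ : R →+* R}
    (f : V →ₛₗ[τ] V) (hf : Function.Surjective f) {S : Submodule R V} (hS : S ≤ S.comap f) :
    S.comap f = S := by
  let G : ℕ → Submodule R V := fun n => (fun T => T.comap f)^[n] S
  have hG : ∀ n v, v ∈ G n ↔ f^[n] v ∈ S := by
    intro n
    induction n with
    | zero => exact fun v => Iff.rfl
    | succ n ih =>
      intro v
      simp only [G]
      rw [Function.iterate_succ_apply', Submodule.mem_comap, Function.iterate_succ_apply]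
      exact ih (f v)
  have hGmono : Monotone G := monotone_nat_of_le_succ fun n v hv => by
    rw [hG, Function.iterate_succ_apply']
    exact hS ((hG n v).mp hv)
  obtain ⟨n, hn⟩ := monotone_stabilizes_iff_noetherian.mpr inferInstance ⟨G, hGmono⟩
  refine le_antisymm (fun y hy => ?_) hS
  obtain ⟨z, rfl⟩ := hf.iterate n y
  have hz : z ∈ G (n + 1) := by
    rw [hG, Function.iterate_succ_apply']
    exact hy
  have hGn : G n = G (n + 1) := hn (n + 1) n.le_succ
  exact (hG n z).mp (hGn ▸ hz)

theorem mem_of_iterate_mem_of_bijOn [IsNoetherianRing R] {τ : R →+* R} {ψ : V →+ V}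
    (hψ : ∀ (w : R) (v : V), ψ (w • v) = τ w • ψ v) {N : Submodule R V} (hN : N.FG)
    (hbij : Set.BijOn ψ N N) {T : Submodule R V} (hT : Set.MapsTo ψ T T) {y : V} (hy : y ∈ N)
    {n : ℕ} (hn : ψ^[n] y ∈ T) : y ∈ T := by
  have := isNoetherian_of_fg_of_noetherian N hN
  let ψN : N →ₛₗ[τ] N :=
    { toFun := fun v => ⟨ψ (v : V), hbij.mapsTo v.2⟩
      map_add' := fun a b => Subtype.ext (map_add ψ (a : V) b)
      map_smul' := fun w v => Subtype.ext (hψ w (v : V)) }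
  have hsurj : Function.Surjective ψN := fun ⟨v, hv⟩ => by
    obtain ⟨u, hu, rfl⟩ := hbij.surjOn hv
    exact ⟨⟨u, hu⟩, rfl⟩
  have hstable := Submodule.comap_eq_self_of_surjective ψN hsurj (S := T.comap N.subtype)
    fun v hv => hT hv
  induction n generalizing y with
  | zero => exact hn
  | succ n ih =>
    rw [Function.iterate_succ_apply] at hn
    exact (SetLike.ext_iff.mp hstable ⟨y, hy⟩).mp (ih (hbij.mapsTo hy) hn)

theorem isPrecomplete_of_finite (I : Ideal R) [IsPrecomplete I R] [Module.Finite R V] :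
    IsPrecomplete I V := by
  rw [← AdicCompletion.of_surjective_iff]
  intro y
  obtain ⟨t, rfl⟩ := AdicCompletion.ofTensorProduct_surjective_of_finite I V y
  induction t using TensorProduct.induction_on with
  | zero => exact ⟨0, by simp⟩
  | tmul r v =>
    obtain ⟨r, rfl⟩ := AdicCompletion.of_surjective I R r
    refine ⟨r • v, ?_⟩
    rw [AdicCompletion.ofTensorProduct_tmul, map_smul, ← Algebra.algebraMap_self_apply r,
      ← AdicCompletion.algebraMap_apply]
    exact (algebraMap_smul _ r _).symm
  | add s t hs ht =>
    obtain ⟨a, ha⟩ := hs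
    obtain ⟨b, hb⟩ := ht
    exact ⟨a + b, by rw [map_add, ha, hb, map_add]⟩

theorem isArtinianRing_quotient_maximalIdeal_pow [IsNoetherianRing R] [IsLocalRing R] (κ : ℕ) :
    IsArtinianRing (R ⧸ maximalIdeal R ^ κ) := by
  have : Ring.KrullDimLE 0 (R ⧸ maximalIdeal R ^ κ) := by
    rw [Ideal.krullDimLE_zero_quotient_iff_forall_minimalPrimes_isMaximal]
    intro J hJ
    have hJp : J.IsPrime := hJ.1.1
    rw [le_antisymm (le_maximalIdeal hJp.ne_top) (hJp.le_of_pow_le hJ.1.2)]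
    exact maximalIdeal.isMaximal R
  exact IsNoetherianRing.isArtinianRing_of_krullDimLE_zero

theorem isArtinian_quotient_maximalIdeal_pow_smul_top [IsNoetherianRing R] [IsLocalRing R]
    [Module.Finite R V] (κ : ℕ) :
    IsArtinian R (V ⧸ (maximalIdeal R ^ κ • ⊤ : Submodule R V)) := by
  have := isArtinianRing_quotient_maximalIdeal_pow (R := R) κ
  have : Module.Finite (R ⧸ maximalIdeal R ^ κ) (V ⧸ (maximalIdeal R ^ κ • ⊤ : Submodule R V)) :=
    Module.Finite.of_restrictScalars_finite R _ _
  exact isArtinian_of_surjective_algebraMap (Ideal.Quotient.mk_surjective (I := maximalIdeal R ^ κ))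

theorem exists_le_sup_of_antitone {P : Submodule R V} [IsArtinian R (V ⧸ P)]
    {C : ℕ → Submodule R V} (hC : Antitone C) : ∃ i₀, ∀ i, C i₀ ≤ C i ⊔ P := by
  obtain ⟨i₀, hi₀⟩ := IsArtinian.monotone_stabilizes
    (⟨fun i => OrderDual.toDual ((C i).map P.mkQ), fun _ _ h => Submodule.map_mono (hC h)⟩ :
      ℕ →o (Submodule R (V ⧸ P))ᵒᵈ)
  refine ⟨i₀, fun i => ?_⟩
  rcases le_total i i₀ with h | h
  · exact (hC h).trans le_sup_left
  · calc C i₀ ≤ ((C i₀).map P.mkQ).comap P.mkQ := Submodule.le_comap_map _ _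
      _ = ((C i).map P.mkQ).comap P.mkQ := congrArg (Submodule.comap P.mkQ) (hi₀ i h)
      _ = C i ⊔ P := by rw [Submodule.comap_map_mkQ, sup_comm]

theorem Submodule.mem_of_forall_mem_sup_pow_smul_top [IsNoetherianRing R] [IsLocalRing R]
    [Module.Finite R V] {C : Submodule R V} {y : V}
    (h : ∀ κ, y ∈ C ⊔ maximalIdeal R ^ κ • ⊤) : y ∈ C := by
  rw [← Submodule.Quotient.mk_eq_zero]
  refine IsHausdorff.haus (I := maximalIdeal R) inferInstance _ fun κ => ?_
  rw [SModEq.zero]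
  have := Submodule.mem_map_of_mem (f := C.mkQ) (h κ)
  rw [Submodule.map_sup, Submodule.map_smul'', Submodule.mkQ_map_self, bot_sup_eq] at this
  exact Submodule.smul_mono le_rfl le_top this

theorem exists_seq_of_le_sup {D Q : ℕ → Submodule R V} (h : ∀ s, D s ≤ D (s + 1) ⊔ Q s)
    {y : V} (hy : y ∈ D 0) :
    ∃ b : ℕ → V, b 0 = y ∧ (∀ s, b s ∈ D s) ∧ ∀ s, b s - b (s + 1) ∈ Q s := by
  have step : ∀ s, ∀ v ∈ D s, ∃ c ∈ D (s + 1), v - c ∈ Q s := fun s v hv => by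
    obtain ⟨c, hc, q, hq, rfl⟩ := Submodule.mem_sup.mp (h s hv)
    exact ⟨c, hc, by simpa using hq⟩
  choose next hnextD hnextQ using step
  let b : (s : ℕ) → ↥(D s) := fun s => Nat.rec ⟨y, hy⟩ (fun s v => ⟨next s v v.2, hnextD s v v.2⟩) s
  exact ⟨fun s => (b s).1, rfl, fun s => (b s).2, fun s => hnextQ s _ (b s).2⟩

/-- Chevalley's lemma. -/
theorem eventually_le_pow_smul_top_of_antitone [IsNoetherianRing R] [IsLocalRing R]
    [IsPrecomplete (maximalIdeal R) R] [Module.Finite R V] {C : ℕ → Submodule R V}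
    (hC : Antitone C) (hsep : ⨅ i, C i = ⊥) (j : ℕ) :
    ∀ᶠ i in atTop, C i ≤ maximalIdeal R ^ j • ⊤ := by
  set P : ℕ → Submodule R V := fun κ => maximalIdeal R ^ κ • ⊤
  have hPanti : Antitone P := fun _ _ h => Submodule.smul_mono (Ideal.pow_le_pow_right h) le_rfl
  have hstab : ∀ κ, ∃ i₀, ∀ i, C i₀ ≤ C i ⊔ P κ := fun κ =>
    haveI := isArtinian_quotient_maximalIdeal_pow_smul_top (R := R) (V := V) κ
    exists_le_sup_of_antitone hC
  choose I hI using hstab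
  refine eventually_atTop.mpr ⟨I j, fun i hi y hy => ?_⟩
  -- lift `y` along the stabilised images to a Cauchy sequence; its limit lies in every `C i`
  obtain ⟨b, rfl, hbC, hbP⟩ := exists_seq_of_le_sup (D := fun s => C (I (j + s)))
    (Q := fun s => P (j + s)) (fun s => hI (j + s) _) (hC hi hy)
  have hcauchy : ∀ {s s'}, s ≤ s' → b s - b s' ∈ P (j + s) := by
    intro s s' h
    induction s', h using Nat.le_induction with
    | base => simp
    | succ s' h ih =>
      rw [← sub_add_sub_cancel _ (b s')]
      exact add_mem ih (hPanti (by omega) (hbP s'))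
  have := isPrecomplete_of_finite (maximalIdeal R) (V := V)
  obtain ⟨L, hL⟩ := IsPrecomplete.prec inferInstance (I := maximalIdeal R) (f := b)
    fun h => SModEq.sub_mem.mpr (hPanti (by omega) (hcauchy h))
  have hLC : ∀ i, L ∈ C i := fun i => Submodule.mem_of_forall_mem_sup_pow_smul_top fun κ => by
    rw [← add_sub_cancel (b κ) L]
    refine add_mem (sup_le_sup_left (hPanti (by omega)) _ (hI (j + κ) i (hbC κ)))
      (Submodule.mem_sup_right ?_)
    exact sub_mem_comm_iff.mp (SModEq.sub_mem.mp (hL κ))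
  have hL0 : L = 0 := by simpa [hsep] using (Submodule.mem_iInf C).mpr hLC
  rw [show b 0 = (b 0 - b j) + (b j - L) by rw [hL0]; abel]
  exact add_mem (hPanti (by omega) (hcauchy (Nat.zero_le j))) (SModEq.sub_mem.mp (hL j))

theorem Submodule.FG.exists_mem_forall_smodEq [IsNoetherianRing R] [IsLocalRing R]
    [IsPrecomplete (maximalIdeal R) R] [IsHausdorff (maximalIdeal R) V] {N : Submodule R V}
    (hN : N.FG) {e : ℕ → V} (he : ∀ κ, e κ ∈ N)
    (hcauchy : ∀ {κ κ'}, κ ≤ κ' → e κ ≡ e κ' [SMOD (maximalIdeal R ^ κ • ⊤ : Submodule R V)]) :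
    ∃ c ∈ N, ∀ κ, e κ ≡ c [SMOD (maximalIdeal R ^ κ • ⊤ : Submodule R V)] := by
  have := Module.Finite.iff_fg.mpr hN
  set C : ℕ → Submodule R N := fun κ => (maximalIdeal R ^ κ • ⊤ : Submodule R V).comap N.subtype
  have hC : Antitone C := fun _ _ h =>
    Submodule.comap_mono (Submodule.smul_mono (Ideal.pow_le_pow_right h) le_rfl)
  have hsep : ⨅ κ, C κ = ⊥ := by
    refine eq_bot_iff.mpr fun y hy => ?_
    have hyC := (Submodule.mem_iInf C).mp hy
    rw [Submodule.mem_bot, ← Submodule.coe_eq_zero]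
    exact IsHausdorff.haus inferInstance (y : V) fun κ => SModEq.zero.mpr (hyC κ)
  obtain ⟨g, hg, hgC⟩ :=
    extraction_forall_of_eventually (eventually_le_pow_smul_top_of_antitone hC hsep)
  obtain ⟨L, hL⟩ := IsPrecomplete.prec (isPrecomplete_of_finite (maximalIdeal R) (V := N))
    (f := fun j => ⟨e (g j), he _⟩) fun {j j'} h => by
      have hdiff := SModEq.sub_mem.mp (hcauchy (hg.monotone h))
      exact SModEq.sub_mem.mpr (hgC j hdiff)
  refine ⟨L, L.2, fun κ => (hcauchy (hg.id_le κ)).trans ?_⟩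
  have := (hL κ).map N.subtype
  rw [Submodule.map_smul''] at this
  exact this.mono (Submodule.smul_mono le_rfl le_top)

theorem exists_mem_forall_eventually_iterate_sub_mem [IsNoetherianRing R] [IsLocalRing R]
    [IsPrecomplete (maximalIdeal R) R] [IsHausdorff (maximalIdeal R) V] {τ : R →+* R}
    {ψ : V →+ V} (hψ : ∀ (w : R) (v : V), ψ (w • v) = τ w • ψ v)
    (hψF : ∀ κ, Set.MapsTo ψ (maximalIdeal R ^ κ • ⊤ : Submodule R V)
      (maximalIdeal R ^ κ • ⊤ : Submodule R V))
    {N : Submodule R V} (hN : N.FG) (hbij : Set.BijOn ψ N N) {x : V}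
    (hx : ∀ κ, ∃ n, ∃ y ∈ N, ψ^[n] x - y ∈ (maximalIdeal R ^ κ • ⊤ : Submodule R V)) :
    ∃ c₀ ∈ N, ∀ κ, ∀ᶠ n in atTop, ψ^[n] (x - c₀) ∈ (maximalIdeal R ^ κ • ⊤ : Submodule R V) := by
  set P : ℕ → Submodule R V := fun κ => maximalIdeal R ^ κ • ⊤
  have hPanti : Antitone P := fun _ _ h => Submodule.smul_mono (Ideal.pow_le_pow_right h) le_rfl
  have happrox : ∀ κ, ∃ e ∈ N, ∀ᶠ n in atTop, ψ^[n] (x - e) ∈ P κ := fun κ => by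
    obtain ⟨n, _, hy, hxy⟩ := hx κ
    obtain ⟨e, he, rfl⟩ := (hbij.iterate n).surjOn hy
    refine ⟨e, he, eventually_atTop.mpr ⟨n, fun n' hn' => ?_⟩⟩
    rw [← Nat.sub_add_cancel hn', Function.iterate_add_apply, iterate_map_sub]
    exact (hψF κ).iterate _ hxy
  choose e heN he using happrox
  have hcauchy : ∀ {κ κ'}, κ ≤ κ' → e κ ≡ e κ' [SMOD P κ] := fun {κ κ'} h => by
    obtain ⟨n, hn, hn'⟩ := ((he κ).and (he κ')).exists
    refine SModEq.sub_mem.mpr (mem_of_iterate_mem_of_bijOn hψ hN hbij (hψF κ)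
      (N.sub_mem (heN κ) (heN κ')) (n := n) ?_)
    rw [show e κ - e κ' = (x - e κ') - (x - e κ) by abel, iterate_map_sub]
    exact sub_mem (hPanti h hn') hn
  obtain ⟨c₀, hc₀N, hc₀⟩ := hN.exists_mem_forall_smodEq heN hcauchy
  refine ⟨c₀, hc₀N, fun κ => (he κ).mono fun n hn => ?_⟩
  rw [show x - c₀ = (x - e κ) + (e κ - c₀) by abel, iterate_map_add]
  exact add_mem hn ((hψF κ).iterate n (SModEq.sub_mem.mp (hc₀ κ)))

end LocalRing

section Decomposition

variable {M : Type*} [AddCommGroup M] (ψ φ : M →+ M)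

def tailSum (d : ℕ → M) (j m : ℕ) : M := ∑ i ∈ Finset.Icc j m, φ^[i - j] (d i)

variable {ψ φ}

theorem tailSum_of_lt (d : ℕ → M) {j m : ℕ} (h : m < j) : tailSum φ d j m = 0 := by
  simp [tailSum, Finset.Icc_eq_empty_of_lt h]

theorem tailSum_eq_add (d : ℕ → M) {j m : ℕ} (h : j ≤ m) :
    tailSum φ d j m = d j + φ (tailSum φ d (j + 1) m) := by
  rw [tailSum, ← Finset.insert_Icc_add_one_left_eq_Icc h, Finset.sum_insert (by simp), tailSum,
    map_sum, Nat.sub_self, Function.iterate_zero_apply]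
  congr 1
  refine Finset.sum_congr rfl fun i hi => ?_
  rw [← Function.iterate_succ_apply' (⇑φ), show (i - (j + 1)).succ = i - j by grind]

theorem tailSum_succ_right (d : ℕ → M) {j m : ℕ} (h : j ≤ m + 1) :
    tailSum φ d j (m + 1) = tailSum φ d j m + φ^[m + 1 - j] (d (m + 1)) := by
  rw [tailSum, Finset.sum_Icc_succ_top h, tailSum]

theorem tailSum_sub (d d' : ℕ → M) (j m : ℕ) :
    tailSum φ (d - d') j m = tailSum φ d j m - tailSum φ d' j m := by
  simp only [tailSum, Pi.sub_apply, iterate_map_sub, Finset.sum_sub_distrib]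

theorem map_tailSum (hψφ : ∀ x, ψ (φ x) = x) {d : ℕ → M} {j : ℕ} (hd : ψ (d j) = 0)
    (m : ℕ) :
    ψ (tailSum φ d j m) = tailSum φ d (j + 1) m := by
  rcases le_or_gt j m with h | h
  · rw [tailSum_eq_add d h, map_add, hd, hψφ, zero_add]
  · rw [tailSum_of_lt d h, tailSum_of_lt d (by omega), map_zero]

theorem iterate_map_tailSum (hψφ : ∀ x, ψ (φ x) = x) {d : ℕ → M} {j : ℕ}
    (hd : ∀ i, j ≤ i → ψ (d i) = 0) (t m : ℕ) :
    ψ^[t] (tailSum φ d j m) = tailSum φ d (j + t) m := by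
  induction t with
  | zero => rfl
  | succ t ih =>
    rw [Function.iterate_succ_apply', ih, map_tailSum hψφ (hd _ (by omega)), add_assoc]

theorem eq_tailSum_sub (hψφ : ∀ x, ψ (φ x) = x) {d : ℕ → M} {j m : ℕ} (hd : ψ (d j) = 0)
    (h : j ≤ m) :
    d j = tailSum φ d j m - φ (ψ (tailSum φ d j m)) := by
  rw [map_tailSum hψφ hd, tailSum_eq_add d h, add_sub_cancel_right]

variable (ψ φ)

def psiDecompositionSeq (x c₀ : M) : ℕ → M
  | 0 => c₀
  | n + 1 => ψ^[n] (x - c₀) - φ (ψ^[n + 1] (x - c₀))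

variable {ψ φ}

theorem sub_tailSum_psiDecompositionSeq (x c₀ : M) (m : ℕ) :
    x - (c₀ + tailSum φ (psiDecompositionSeq ψ φ x c₀) 1 m) = φ^[m] (ψ^[m] (x - c₀)) := by
  induction m with
  | zero => rw [tailSum_of_lt _ zero_lt_one, add_zero]; rfl
  | succ m ih =>
    rw [tailSum_succ_right _ (by omega), Nat.add_sub_cancel, ← add_assoc, ← sub_sub, ih,
      psiDecompositionSeq, iterate_map_sub φ, ← Function.iterate_succ_apply, sub_sub_cancel]

variable (F : ℕ → AddSubgroup M) (N : AddSubgroup M) (ψ φ)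

def IsPsiDecomposition (x : M) (c : ℕ → M) : Prop :=
  c 0 ∈ N ∧ (∀ i, 1 ≤ i → ψ (c i) = 0) ∧ (∀ κ, ∀ᶠ i in atTop, c i ∈ F κ) ∧
    ∀ κ, ∀ᶠ m in atTop, x - (c 0 + tailSum φ c 1 m) ∈ F κ

variable {F N ψ φ}

theorem isPsiDecomposition_psiDecompositionSeq (hψφ : ∀ x, ψ (φ x) = x)
    (hφF : ∀ κ, Set.MapsTo φ (F κ) (F κ)) {x c₀ : M} (hc₀ : c₀ ∈ N)
    (h : ∀ κ, ∀ᶠ n in atTop, ψ^[n] (x - c₀) ∈ F κ) :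
    IsPsiDecomposition ψ φ F N x (psiDecompositionSeq ψ φ x c₀) := by
  refine ⟨hc₀, ?_, fun κ => ?_, fun κ => ?_⟩
  · rintro (_ | n) hn
    · omega
    · rw [psiDecompositionSeq, map_sub, hψφ, ← Function.iterate_succ_apply' (⇑ψ), sub_self]
  · filter_upwards [(tendsto_sub_atTop_nat 1).eventually (h κ), h κ, eventually_ge_atTop 1]
      with i hi hi' hi1
    obtain ⟨n, rfl⟩ := Nat.exists_eq_add_of_le' hi1
    exact sub_mem hi (hφF κ hi')
  · filter_upwards [h κ] with m hm
    rw [psiDecompositionSeq, sub_tailSum_psiDecompositionSeq]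
    exact (hφF κ).iterate m hm

theorem eq_zero_of_forall_eventually_add_tailSum_mem (hψφ : ∀ x, ψ (φ x) = x)
    (hψF : ∀ κ, Set.MapsTo ψ (F κ) (F κ)) (hφF : ∀ κ, Set.MapsTo φ (F κ) (F κ))
    (hsep : ∀ y, (∀ κ, y ∈ F κ) → y = 0)
    (hN : ∀ y ∈ N, ∀ n κ, ψ^[n] y ∈ F κ → y ∈ F κ) {d : ℕ → M} (hd0 : d 0 ∈ N)
    (hd : ∀ i, 1 ≤ i → ψ (d i) = 0) (hS : ∀ κ, ∀ᶠ m in atTop, d 0 + tailSum φ d 1 m ∈ F κ) :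
    d = 0 := by
  have hd0 : d 0 = 0 := hsep _ fun κ => by
    obtain ⟨m, hm⟩ := (hS κ).exists
    refine hN _ hd0 m κ ?_
    have := (hψF κ).iterate m hm
    rwa [iterate_map_add, iterate_map_tailSum hψφ hd, tailSum_of_lt _ (by omega), add_zero] at this
  funext j
  rcases j with _ | j
  · exact hd0
  refine hsep _ fun κ => ?_
  obtain ⟨m, hm, hjm⟩ := ((hS κ).and (eventually_ge_atTop (j + 1))).exists
  rw [hd0, zero_add] at hm
  have hT := (hψF κ).iterate j hm
  rw [iterate_map_tailSum hψφ hd, add_comm] at hT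
  rw [eq_tailSum_sub hψφ (hd _ (by omega)) hjm]
  exact sub_mem hT (hφF κ (hψF κ hT))

theorem existsUnique_isPsiDecomposition (hψφ : ∀ x, ψ (φ x) = x)
    (hψF : ∀ κ, Set.MapsTo ψ (F κ) (F κ)) (hφF : ∀ κ, Set.MapsTo φ (F κ) (F κ))
    (hsep : ∀ y, (∀ κ, y ∈ F κ) → y = 0)
    (hN : ∀ y ∈ N, ∀ n κ, ψ^[n] y ∈ F κ → y ∈ F κ) {x : M}
    (hx : ∃ c₀ ∈ N, ∀ κ, ∀ᶠ n in atTop, ψ^[n] (x - c₀) ∈ F κ) :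
    ∃! c, IsPsiDecomposition ψ φ F N x c := by
  obtain ⟨c₀, hc₀N, hc₀⟩ := hx
  have hc₀' := isPsiDecomposition_psiDecompositionSeq hψφ hφF hc₀N hc₀
  refine ⟨_, hc₀', fun c hc => sub_eq_zero.mp ?_⟩
  refine eq_zero_of_forall_eventually_add_tailSum_mem hψφ hψF hφF hsep hN (N.sub_mem hc.1 hc₀'.1)
    (fun i hi => by rw [Pi.sub_apply, map_sub, hc.2.1 i hi, hc₀'.2.1 i hi, sub_zero]) fun κ => ?_
  filter_upwards [hc.2.2.2 κ, hc₀'.2.2.2 κ] with m h h'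
  convert sub_mem h' h using 1
  rw [tailSum_sub, Pi.sub_apply]
  abel

end Decomposition

theorem mem_span_natCast_pow_smul_top_iff {R A M : Type*} [CommRing R] [Semiring A]
    [AddCommGroup M] [Module R M] [Module A M] (p κ : ℕ) (v : M) :
    v ∈ (Ideal.span {(p : R)} ^ κ • ⊤ : Submodule R M) ↔ ∃ z, v = (p : A) ^ κ • z := by
  rw [Ideal.span_singleton_pow, Submodule.ideal_span_singleton_smul,
    Submodule.mem_smul_pointwise_iff_exists]
  simp only [Submodule.mem_top, true_and, ← Nat.cast_pow, Nat.cast_smul_eq_nsmul, eq_comm]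

theorem mapsTo_span_natCast_pow_smul_top {R M : Type*} [CommRing R] [AddCommGroup M]
    [Module R M] (f : M →+ M) (p κ : ℕ) :
    Set.MapsTo f (Ideal.span {(p : R)} ^ κ • ⊤ : Submodule R M)
      (Ideal.span {(p : R)} ^ κ • ⊤ : Submodule R M) := by
  intro v hv
  obtain ⟨z, rfl⟩ := (mem_span_natCast_pow_smul_top_iff (A := ℕ) p κ v).mp hv
  exact (mem_span_natCast_pow_smul_top_iff (A := ℕ) p κ _).mpr ⟨f z, map_nsmul f _ z⟩

theorem IsHausdorff.of_span_natCast {R A M : Type*} [CommRing R] [CommRing A] [AddCommGroup M]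
    [Module R M] [Module A M] (p : ℕ) [IsHausdorff (Ideal.span {(p : A)}) M] :
    IsHausdorff (Ideal.span {(p : R)}) M :=
  ⟨fun v hv => IsHausdorff.haus ‹_› v fun κ => by
    simpa only [SModEq.zero, mem_span_natCast_pow_smul_top_iff (A := ℕ)] using hv κ⟩

theorem existsUnique_isPsiDecomposition_of_maximalIdeal_eq {R M : Type*} [CommRing R]
    [IsNoetherianRing R] [IsLocalRing R] {p : ℕ} (hm : maximalIdeal R = Ideal.span {(p : R)})
    [IsPrecomplete (Ideal.span {(p : R)}) R] [AddCommGroup M] [Module R M]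
    [IsHausdorff (Ideal.span {(p : R)}) M] {τ : R →+* R} {ψ φ : M →+ M}
    (hψ : ∀ (w : R) (v : M), ψ (w • v) = τ w • ψ v) (hψφ : ∀ x, ψ (φ x) = x)
    {N : Submodule R M} (hN : N.FG) (hbij : Set.BijOn ψ N N) {x : M}
    (hx : ∀ κ, ∃ n, ∃ y ∈ N, ψ^[n] x - y ∈ (Ideal.span {(p : R)} ^ κ • ⊤ : Submodule R M)) :
    ∃! c, IsPsiDecomposition ψ φ
      (fun κ => (Ideal.span {(p : R)} ^ κ • ⊤ : Submodule R M).toAddSubgroup)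
      N.toAddSubgroup x c := by
  have : IsPrecomplete (maximalIdeal R) R := hm ▸ ‹_›
  have : IsHausdorff (maximalIdeal R) M := hm ▸ ‹_›
  have hF (f : M →+ M) κ := mapsTo_span_natCast_pow_smul_top (R := R) f p κ
  rw [← hm] at hx hF ⊢
  obtain ⟨c₀, hc₀N, hc₀⟩ := exists_mem_forall_eventually_iterate_sub_mem hψ (hF ψ) hN hbij hx
  exact existsUnique_isPsiDecomposition hψφ (hF ψ) (hF φ)
    (fun v hv => IsHausdorff.haus ‹_› v fun κ => SModEq.zero.mpr (hv κ))
    (fun y hy n κ h => mem_of_iterate_mem_of_bijOn hψ hN hbij (hF ψ κ) hy h) ⟨c₀, hc₀N, hc₀⟩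

theorem map_smul_eq_symm_smul_of_map_algebraMap {S A M : Type*} [CommRing S] [CommRing A]
    [Algebra S A] [AddCommGroup M] [Module A M] [Module S M] [IsScalarTower S A M]
    {σ : S ≃+* S} {φ : A →+* A} (hφ : ∀ s, φ (algebraMap S A s) = algebraMap S A (σ s))
    {ψ : M →+ M} (hψ : ∀ a x, ψ (φ a • x) = a • ψ x) (s : S) (x : M) :
    ψ (s • x) = σ.symm s • ψ x := by
  obtain ⟨t, rfl⟩ := σ.surjective s
  rw [σ.symm_apply_apply, ← algebraMap_smul A (σ t) x, ← hφ, hψ, algebraMap_smul]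

theorem unique_psi_decomposition_general (p r : ℕ) [Fact p.Prime]
    (k : Type*) [Field k] [IsAlgClosed k] [CharP k p]
    (I : Ideal (RestrictedPS p (WittVector p k) r))
    (φ : (RestrictedPS p (WittVector p k) r ⧸ I) →+*
      (RestrictedPS p (WittVector p k) r ⧸ I))
    (hφW : ∀ w : WittVector p k,
      φ (algebraMap (WittVector p k) (RestrictedPS p (WittVector p k) r ⧸ I) w) =
        algebraMap (WittVector p k) (RestrictedPS p (WittVector p k) r ⧸ I)
          (WittVector.frobenius w))
    (M : Type*) [AddCommGroup M]
    [Module (RestrictedPS p (WittVector p k) r ⧸ I) M]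
    [Module (WittVector p k) M]
    [IsScalarTower (WittVector p k) (RestrictedPS p (WittVector p k) r ⧸ I) M]
    [IsAdicComplete (Ideal.span {(p : RestrictedPS p (WittVector p k) r ⧸ I)}) M]
    (ψ : M →+ M)
    (hψ : ∀ (a : RestrictedPS p (WittVector p k) r ⧸ I) (x : M),
      ψ (φ a • x) = a • ψ x)
    -- `M♯`, the unique `W`-submodule furnished by Statement 9:
    (N : Submodule (WittVector p k) M) (hNfg : N.FG) (hNbij : Set.BijOn ψ N N)
    (hNlim : ∀ (x : M) (κ : ℕ), 1 ≤ κ → ∃ n₀ : ℕ, ∀ n ≥ n₀, ∃ y ∈ N, ∃ z : M,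
      (⇑ψ)^[n] x = y + (p : RestrictedPS p (WittVector p k) r ⧸ I) ^ κ • z)
    -- an additive map `φ_M` with `ψ ∘ φ_M = id_M`:
    (φM : M →+ M) (hφM : ∀ x : M, ψ (φM x) = x) :
    ∀ x : M, ∃! c : ℕ → M,
      c 0 ∈ N ∧
      (∀ i : ℕ, 1 ≤ i → ψ (c i) = 0) ∧
      -- `c_i → 0` `p`-adically:
      (∀ κ : ℕ, ∃ n₀ : ℕ, ∀ i ≥ n₀, ∃ z : M,
        c i = (p : RestrictedPS p (WittVector p k) r ⧸ I) ^ κ • z) ∧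
      -- `x = c₀ + ∑_{i ≥ 1} φ_M^{i-1}(c_i)`, the series converging `p`-adically:
      (∀ κ : ℕ, ∃ n₀ : ℕ, ∀ m ≥ n₀, ∃ z : M,
        x - (c 0 + ∑ i ∈ Finset.Icc 1 m, (⇑φM)^[i - 1] (c i)) =
          (p : RestrictedPS p (WittVector p k) r ⧸ I) ^ κ • z) := by
  intro x
  set A := RestrictedPS p (WittVector p k) r ⧸ I
  have hσ : ∀ (w : WittVector p k) (v : M),
      ψ (w • v) = (WittVector.frobeniusEquiv p k).symm.toRingHom w • ψ v :=
    map_smul_eq_symm_smul_of_map_algebraMap (A := A) (σ := WittVector.frobeniusEquiv p k)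
      (φ := φ) hφW hψ
  have hx : ∀ κ, ∃ n, ∃ y ∈ N, (⇑ψ)^[n] x - y ∈
      (Ideal.span {(p : WittVector p k)} ^ κ • ⊤ : Submodule (WittVector p k) M) := fun κ => by
    obtain ⟨n, hn⟩ := hNlim x (κ + 1) (by omega)
    obtain ⟨y, hy, z, hz⟩ := hn n le_rfl
    refine ⟨n, y, hy, (mem_span_natCast_pow_smul_top_iff (A := A) p κ _).mpr ⟨(p : A) • z, ?_⟩⟩
    rw [hz, add_sub_cancel_left, pow_succ, mul_smul]
  have := IsHausdorff.of_span_natCast (R := WittVector p k) (A := A) (M := M) p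
  simpa only [IsPsiDecomposition, tailSum, eventually_atTop, Submodule.mem_toAddSubgroup,
    mem_span_natCast_pow_smul_top_iff (A := A)] using
    existsUnique_isPsiDecomposition_of_maximalIdeal_eq (WittVector.irreducible p).maximalIdeal_eq
      hσ hφM hNfg hNbij hx

theorem unique_psi_decomposition (p r : ℕ) [Fact p.Prime]
    (k : Type*) [Field k] [IsAlgClosed k] [CharP k p]
    (I : Ideal (RestrictedPS p (WittVector p k) r))
    (φ : (RestrictedPS p (WittVector p k) r ⧸ I) →+*
      (RestrictedPS p (WittVector p k) r ⧸ I))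
    (hφW : ∀ w : WittVector p k,
      φ (algebraMap (WittVector p k) (RestrictedPS p (WittVector p k) r ⧸ I) w) =
        algebraMap (WittVector p k) (RestrictedPS p (WittVector p k) r ⧸ I)
          (WittVector.frobenius w))
    (hφp : ∀ a, ∃ c, φ a = a ^ p + (p : RestrictedPS p (WittVector p k) r ⧸ I) * c)
    (M : Type*) [AddCommGroup M]
    [Module (RestrictedPS p (WittVector p k) r ⧸ I) M]
    [Module (WittVector p k) M]
    [IsScalarTower (WittVector p k) (RestrictedPS p (WittVector p k) r ⧸ I) M]
    [Module.Finite (RestrictedPS p (WittVector p k) r ⧸ I) M]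
    [IsAdicComplete (Ideal.span {(p : RestrictedPS p (WittVector p k) r ⧸ I)}) M]
    (ψ : M →+ M)
    (hψ : ∀ (a : RestrictedPS p (WittVector p k) r ⧸ I) (x : M),
      ψ (φ a • x) = a • ψ x)
    -- `M♯`, the unique `W`-submodule furnished by Statement 9:
    (N : Submodule (WittVector p k) M) (hNfg : N.FG) (hNbij : Set.BijOn ψ N N)
    (hNlim : ∀ (x : M) (κ : ℕ), 1 ≤ κ → ∃ n₀ : ℕ, ∀ n ≥ n₀, ∃ y ∈ N, ∃ z : M,
      (⇑ψ)^[n] x = y + (p : RestrictedPS p (WittVector p k) r ⧸ I) ^ κ • z)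
    -- an additive map `φ_M` with `ψ ∘ φ_M = id_M`:
    (φM : M →+ M) (hφM : ∀ x : M, ψ (φM x) = x) :
    ∀ x : M, ∃! c : ℕ → M,
      c 0 ∈ N ∧
      (∀ i : ℕ, 1 ≤ i → ψ (c i) = 0) ∧
      -- `c_i → 0` `p`-adically:
      (∀ κ : ℕ, ∃ n₀ : ℕ, ∀ i ≥ n₀, ∃ z : M,
        c i = (p : RestrictedPS p (WittVector p k) r ⧸ I) ^ κ • z) ∧
      -- `x = c₀ + ∑_{i ≥ 1} φ_M^{i-1}(c_i)`, the series converging `p`-adically: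
      (∀ κ : ℕ, ∃ n₀ : ℕ, ∀ m ≥ n₀, ∃ z : M,
        x - (c 0 + ∑ i ∈ Finset.Icc 1 m, (⇑φM)^[i - 1] (c i)) =
          (p : RestrictedPS p (WittVector p k) r ⧸ I) ^ κ • z) :=
  unique_psi_decomposition_general p r k I φ hφW M ψ hψ N hNfg hNbij hNlim φM hφM
end

section
/- Let (r_n)_{n≥0} be a strictly decreasing sequence of positive rational numbers with r_n → 0, and let (u_n)_{n≥0} be a family with u_n ∈ A_{r_n}^× for all n. Suppose there exist a real number δ > 0 and an integer N such that for every n ≥ N one can write u_n = 1 + Σ_{k≥1} c_{n,k} T^k with v_p(c_{n,k}) + k·r_n ≥ δ for all k ≥ 1. Then there exist v_n ∈ A_{r_n}^× with u_n = v_{n+1}·v_n^{−1} in A_{r_n} for all n ≥ 0; equivalently, the class of (u_n)_n in the Picard group of the open unit ball is zero. -/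
/-!
Put `c n = p ^ (-r n)`, the radius of the `n`-th closed disc, so that `A_{r n}` is the ring of
power series restricted at radius `c n`; the radii increase strictly to `1`. In the Gauss norm at
radius `c`, any restricted `f` with `‖f - 1‖_c < 1` is a unit of the Tate algebra, so for `n < N`
nothing has to be done and it suffices to split the cocycle from `N` on.

For `m ≥ N` let `P m` be the truncation of `u m` at the largest degree `D m ≤ m` with
`c m ^ D m ≥ θ`, for a fixed `p ^ (-δ) < θ < 1`. Then `‖P m - 1‖ ≤ p ^ (-δ) / θ < 1` on the whole
closed unit disc, so `P m` is a unit of every `A_{r n}`, while `F m = (u m)⁻¹ * P m` satisfies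
`‖F m - 1‖_{c n} ≤ p ^ (-δ) * (c n / c m) ^ (D m + 1)`, which tends to `0` as `m → ∞` because
`D m → ∞`. Hence `Z n = ∏_{m ≥ n} F m` converges in `A_{r n}` to a unit with
`Z n = F n * Z (n + 1)`, and `v n = P 0 ⋯ P (n - 1) * Z n` satisfies
`u n * v n = P 0 ⋯ P n * Z (n + 1) = v (n + 1)`.
-/

open Filter Topology

/-- Membership in the Tate algebra `A_r` of the closed ball `{v_p(T) ≥ r}`. -/
def MemTate (p : ℕ) {C : Type*} [NormedField C] (r : ℚ) (f : PowerSeries C) : Prop :=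
  Tendsto (fun k : ℕ => ‖PowerSeries.coeff k f‖ * (p : ℝ) ^ (-(r : ℝ) * k))
    atTop (𝓝 0)

/-- `f` is a unit of the Tate algebra `A_r` (a subring of `C[[T]]`). -/
def IsTateUnit (p : ℕ) {C : Type*} [NormedField C] (r : ℚ) (f : PowerSeries C) : Prop :=
  MemTate p r f ∧ ∃ g : PowerSeries C, MemTate p r g ∧ f * g = 1

open Finset

theorem exists_tendsto_atTop_le_pow {c : ℕ → ℝ} (hc : Tendsto c atTop (𝓝 1)) {θ : ℝ}
    (hθ : θ < 1) : ∃ D : ℕ → ℕ, Tendsto D atTop atTop ∧ ∀ m, θ ≤ c m ^ D m := by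
  refine ⟨fun m => Nat.findGreatest (fun d => θ ≤ c m ^ d) m, tendsto_atTop.2 fun d => ?_,
    fun m => Nat.findGreatest_spec (P := fun d => θ ≤ c m ^ d) (Nat.zero_le m)
      (by simpa using hθ.le)⟩
  have hpow : ∀ᶠ m in atTop, θ < c m ^ d :=
    (hc.pow d).eventually (lt_mem_nhds (by simpa using hθ))
  filter_upwards [hpow, eventually_ge_atTop d] with m hm hdm
  exact Nat.le_findGreatest hdm hm.le

theorem tendsto_div_pow_atTop_nhds_zero {c : ℕ → ℝ} (hc0 : ∀ n, 0 < c n) (hc : StrictMono c)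
    {D : ℕ → ℕ} (hD : Tendsto D atTop atTop) (n : ℕ) :
    Tendsto (fun m => (c n / c m) ^ D m) atTop (𝓝 0) := by
  have hq : c n / c (n + 1) < 1 := (div_lt_one (hc0 _)).2 (hc n.lt_succ_self)
  have hnonneg (m : ℕ) : 0 ≤ c n / c m := div_nonneg (hc0 n).le (hc0 m).le
  refine squeeze_zero' (Eventually.of_forall fun m => pow_nonneg (hnonneg m) _)
    ((eventually_ge_atTop (n + 1)).mono fun m hm => pow_le_pow_left₀ (hnonneg m)
      (div_le_div_of_nonneg_left (hc0 n).le (hc0 _) (hc.monotone hm)) _)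
    ((tendsto_pow_atTop_nhds_zero_of_lt_one (hnonneg _) hq).comp hD)

namespace PowerSeries

section NormedCommRing

variable {R : Type*} [NormedCommRing R] {c c' a b ε : ℝ} {f g : PowerSeries R}

noncomputable def termNorm (c : ℝ) (f : PowerSeries R) (k : ℕ) : ℝ :=
  ‖coeff k f‖ * c ^ k

def GaussNormLE (c : ℝ) (f : PowerSeries R) (ε : ℝ) : Prop :=
  ∀ k, termNorm c f k ≤ ε

theorem isRestricted_iff_tendsto_termNorm :
    IsRestricted c f ↔ Tendsto (termNorm c f) atTop (𝓝 0) :=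
  isRestricted_iff' c f

theorem termNorm_nonneg (hc : 0 ≤ c) (f : PowerSeries R) (k : ℕ) : 0 ≤ termNorm c f k :=
  mul_nonneg (norm_nonneg _) (pow_nonneg hc k)

theorem termNorm_mono (hc' : 0 ≤ c') (h : c' ≤ c) (f : PowerSeries R) (k : ℕ) :
    termNorm c' f k ≤ termNorm c f k :=
  mul_le_mul_of_nonneg_left (pow_le_pow_left₀ hc' h k) (norm_nonneg _)

theorem IsRestricted.mono (hc' : 0 ≤ c') (h : c' ≤ c) (hf : IsRestricted c f) :
    IsRestricted c' f := by
  rw [isRestricted_iff_tendsto_termNorm] at hf ⊢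
  exact squeeze_zero (termNorm_nonneg hc' f) (termNorm_mono hc' h f) hf

theorem GaussNormLE.nonneg (h : GaussNormLE c f ε) : 0 ≤ ε :=
  (norm_nonneg _).trans (by simpa [termNorm] using h 0)

theorem GaussNormLE.mono (h : GaussNormLE c f ε) (hc' : 0 ≤ c') (hcc' : c' ≤ c) :
    GaussNormLE c' f ε :=
  fun k => (termNorm_mono hc' hcc' f k).trans (h k)

theorem GaussNormLE.weaken (h : GaussNormLE c f a) (hab : a ≤ b) : GaussNormLE c f b :=
  fun k => (h k).trans hab

theorem gaussNormLE_zero (hε : 0 ≤ ε) : GaussNormLE c (0 : PowerSeries R) ε := by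
  simpa [GaussNormLE, termNorm] using hε

theorem gaussNormLE_one [NormOneClass R] : GaussNormLE c (1 : PowerSeries R) 1 := by
  intro k
  rcases k with _ | k <;> simp [termNorm, coeff_one]

@[simp]
theorem termNorm_neg (c : ℝ) (f : PowerSeries R) (k : ℕ) :
    termNorm c (-f) k = termNorm c f k := by
  simp [termNorm]

theorem termNorm_trunc (c : ℝ) (n : ℕ) (f : PowerSeries R) (k : ℕ) :
    termNorm c (trunc n f : PowerSeries R) k = if k < n then termNorm c f k else 0 := by
  split_ifs with hk <;> simp [termNorm, Polynomial.coeff_coe, coeff_trunc, hk]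

theorem gaussNormLE_sub_one_of_coeff_zero_eq_one (h0 : coeff 0 f = 1)
    (h : ∀ k, 1 ≤ k → termNorm c f k ≤ ε) (hε : 0 ≤ ε) : GaussNormLE c (f - 1) ε := by
  rintro (_ | k)
  · rwa [termNorm, map_sub, h0, coeff_zero_one, sub_self, norm_zero, zero_mul]
  · simpa [termNorm, coeff_one] using h (k + 1) k.succ_pos

theorem isRestricted_coe (c : ℝ) (φ : Polynomial R) : IsRestricted c (φ : PowerSeries R) := by
  rw [isRestricted_iff_tendsto_termNorm]
  refine tendsto_atTop_of_eventually_const (i₀ := φ.natDegree + 1) fun k hk => ?_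
  simp [termNorm, Polynomial.coeff_coe, Polynomial.coeff_eq_zero_of_natDegree_lt hk]

theorem GaussNormLE.trunc_of_le_pow {θ : ℝ} {D : ℕ} (hf : GaussNormLE c f ε) (hc : 0 ≤ c)
    (hc1 : c ≤ 1) (hθ : 0 < θ) (hD : θ ≤ c ^ D) :
    GaussNormLE 1 (trunc (D + 1) f : PowerSeries R) (ε / θ) := by
  intro k
  rw [termNorm_trunc]
  split_ifs with hk
  · rw [termNorm, one_pow, mul_one, le_div_iff₀ hθ]
    calc ‖coeff k f‖ * θ ≤ ‖coeff k f‖ * c ^ k :=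
          mul_le_mul_of_nonneg_left (hD.trans (pow_le_pow_of_le_one hc hc1 (by omega)))
            (norm_nonneg _)
      _ ≤ ε := hf k
  · exact div_nonneg hf.nonneg hθ.le

theorem GaussNormLE.sub_trunc (hf : GaussNormLE c f ε) (hc : 0 < c) (hc' : 0 ≤ c')
    (hcc' : c' ≤ c) (n : ℕ) :
    GaussNormLE c' (f - (trunc n f : PowerSeries R)) (ε * (c' / c) ^ n) := by
  have hq0 : 0 ≤ c' / c := div_nonneg hc' hc.le
  have hq1 : c' / c ≤ 1 := (div_le_one hc).2 hcc'
  intro k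
  by_cases hk : k < n
  · simp [termNorm, Polynomial.coeff_coe, coeff_trunc, hk,
      mul_nonneg hf.nonneg (pow_nonneg hq0 n)]
  · calc termNorm c' (f - (trunc n f : PowerSeries R)) k = termNorm c f k * (c' / c) ^ k := by
          simp only [termNorm, map_sub, Polynomial.coeff_coe, coeff_trunc, if_neg hk, sub_zero]
          rw [mul_assoc, ← mul_pow, mul_div_cancel₀ _ hc.ne']
      _ ≤ ε * (c' / c) ^ n :=
          mul_le_mul (hf k) (pow_le_pow_of_le_one hq0 hq1 (not_lt.1 hk)) (pow_nonneg hq0 k)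
            hf.nonneg

def IsRestrictedUnit (c : ℝ) (f : PowerSeries R) : Prop :=
  IsRestricted c f ∧ ∃ g, IsRestricted c g ∧ f * g = 1

theorem IsRestrictedUnit.mono (hc' : 0 ≤ c') (h : c' ≤ c) (hf : IsRestrictedUnit c f) :
    IsRestrictedUnit c' f :=
  let ⟨hf, g, hg, hfg⟩ := hf
  ⟨hf.mono hc' h, g, hg.mono hc' h, hfg⟩

variable [IsUltrametricDist R]

theorem IsRestricted.prod {ι : Type*} {s : Finset ι} {G : ι → PowerSeries R}
    (h : ∀ i ∈ s, IsRestricted c (G i)) : IsRestricted c (∏ i ∈ s, G i) :=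
  Subring.prod_mem (IsRestricted.subring c) (t := s) (f := G) h

theorem termNorm_add_le (hc : 0 ≤ c) (f g : PowerSeries R) (k : ℕ) :
    termNorm c (f + g) k ≤ max (termNorm c f k) (termNorm c g k) := by
  rw [termNorm, termNorm, termNorm, ← max_mul_of_nonneg _ _ (pow_nonneg hc k), map_add]
  exact mul_le_mul_of_nonneg_right (IsUltrametricDist.norm_add_le_max _ _) (pow_nonneg hc k)

theorem exists_termNorm_mul_le (hc : 0 ≤ c) (f g : PowerSeries R) (k : ℕ) :
    ∃ i j, i + j = k ∧ termNorm c (f * g) k ≤ termNorm c f i * termNorm c g j := by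
  obtain ⟨⟨i, j⟩, hij, hle⟩ := IsUltrametricDist.exists_norm_finsetSum_le_of_nonempty
    (⟨(0, k), by simp⟩ : (antidiagonal k).Nonempty) fun x => coeff x.1 f * coeff x.2 g
  rw [HasAntidiagonal.mem_antidiagonal] at hij
  refine ⟨i, j, hij, ?_⟩
  calc termNorm c (f * g) k ≤ ‖coeff i f‖ * ‖coeff j g‖ * c ^ k := by
        rw [termNorm, coeff_mul]
        exact mul_le_mul_of_nonneg_right (hle.trans (norm_mul_le _ _)) (pow_nonneg hc k)
    _ = termNorm c f i * termNorm c g j := by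
        rw [termNorm, termNorm, ← hij, pow_add]
        ring

theorem GaussNormLE.add (hc : 0 ≤ c) (hf : GaussNormLE c f a) (hg : GaussNormLE c g b) :
    GaussNormLE c (f + g) (max a b) :=
  fun k => (termNorm_add_le hc f g k).trans (max_le_max (hf k) (hg k))

theorem GaussNormLE.mul (hc : 0 ≤ c) (hf : GaussNormLE c f a) (hg : GaussNormLE c g b) :
    GaussNormLE c (f * g) (a * b) := by
  intro k
  obtain ⟨i, j, -, hle⟩ := exists_termNorm_mul_le hc f g k
  exact hle.trans (mul_le_mul (hf i) (hg j) (termNorm_nonneg hc g j) hf.nonneg)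

theorem IsRestrictedUnit.mul (hf : IsRestrictedUnit c f) (hg : IsRestrictedUnit c g) :
    IsRestrictedUnit c (f * g) :=
  let ⟨hf, f', hf', hff'⟩ := hf
  let ⟨hg, g', hg', hgg'⟩ := hg
  ⟨isRestricted.mul c hf hg, f' * g', isRestricted.mul c hf' hg',
    by rw [mul_mul_mul_comm, hff', hgg', one_mul]⟩

theorem IsRestrictedUnit.prod {ι : Type*} {s : Finset ι} {G : ι → PowerSeries R}
    (h : ∀ i ∈ s, IsRestrictedUnit c (G i)) : IsRestrictedUnit c (∏ i ∈ s, G i) := by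
  classical
  induction s using Finset.induction_on with
  | empty => exact ⟨by simpa using isRestricted_one c, 1, isRestricted_one c, by simp⟩
  | insert i s hi ih =>
    rw [prod_insert hi]
    exact (h i (mem_insert_self i s)).mul (ih fun j hj => h j (mem_insert_of_mem hj))

theorem exists_coboundary_of_shift {c : ℕ → ℝ} (hc0 : ∀ n, 0 ≤ c n) (hc : Monotone c)
    {u : ℕ → PowerSeries R} (hu : ∀ n, IsRestrictedUnit (c n) (u n)) (N : ℕ)
    {w : ℕ → PowerSeries R} (hw : ∀ n, IsRestrictedUnit (c (n + N)) (w n))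
    (huw : ∀ n, u (n + N) * w n = w (n + 1)) :
    ∃ v : ℕ → PowerSeries R, (∀ n, IsRestrictedUnit (c n) (v n)) ∧ ∀ n, u n * v n = v (n + 1) := by
  induction N generalizing w with
  | zero => exact ⟨w, hw, huw⟩
  | succ N ih =>
    obtain ⟨huN, g, hg, hug⟩ := hu N
    refine ih (w := fun n => Nat.casesOn n (g * w 0) w) (fun n => ?_) (fun n => ?_)
    · cases n with
      | zero =>
        have hgN : IsRestrictedUnit (c N) g := ⟨hg, u N, huN, by rw [mul_comm, hug]⟩
        rw [zero_add]
        exact hgN.mul ((zero_add (N + 1) ▸ hw 0).mono (hc0 N) (hc N.le_succ))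
      | succ n =>
        rw [add_right_comm]
        exact hw n
    · cases n with
      | zero =>
        show u (0 + N) * (g * w 0) = w 0
        rw [zero_add, ← mul_assoc, hug, one_mul]
      | succ n =>
        rw [add_right_comm]
        exact huw n

theorem termNorm_sub_one_le_of_mul_eq_one (hc : 0 ≤ c) (hfg : f * g = 1)
    (h0 : termNorm c (f - 1) 0 < 1) (k : ℕ) :
    termNorm c (g - 1) k ≤ termNorm c (f - 1) k ∨ ∃ i j, 0 < i ∧ i + j = k ∧
      termNorm c (g - 1) k ≤ termNorm c (f - 1) i * termNorm c (g - 1) j := by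
  have hrec : g - 1 = -(f - 1) + -((f - 1) * (g - 1)) := by linear_combination hfg
  obtain ⟨i, j, hij, hmul⟩ := exists_termNorm_mul_le hc (f - 1) (g - 1) k
  have hk : termNorm c (g - 1) k ≤
      max (termNorm c (f - 1) k) (termNorm c (f - 1) i * termNorm c (g - 1) j) := by
    have h := termNorm_add_le hc (-(f - 1)) (-((f - 1) * (g - 1))) k
    rw [← hrec, termNorm_neg, termNorm_neg] at h
    exact h.trans (max_le_max le_rfl hmul)
  rcases Nat.eq_zero_or_pos i with rfl | hi
  · -- the term `i = 0` is absorbed since `‖coeff 0 (f - 1)‖ < 1`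
    rw [zero_add] at hij
    subst hij
    left
    by_contra hlt
    push Not at hlt
    have hself : termNorm c (g - 1) j ≤ termNorm c (f - 1) 0 * termNorm c (g - 1) j := by
      rcases le_max_iff.1 hk with h | h
      · exact absurd h (not_le.2 hlt)
      · exact h
    nlinarith [termNorm_nonneg hc (f - 1) j]
  · rcases le_max_iff.1 hk with h | h
    · exact Or.inl h
    · exact Or.inr ⟨i, j, hi, hij, h⟩

theorem GaussNormLE.sub_one_of_mul_eq_one (hc : 0 ≤ c) (hfg : f * g = 1)
    (hf : GaussNormLE c (f - 1) ε) (hε : ε < 1) : GaussNormLE c (g - 1) ε := by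
  intro k
  induction k using Nat.strong_induction_on with
  | _ k ih =>
    rcases termNorm_sub_one_le_of_mul_eq_one hc hfg ((hf 0).trans_lt hε) k with
      h | ⟨i, j, hi, hij, h⟩
    · exact h.trans (hf k)
    · refine h.trans ((mul_le_mul (hf i) (ih j (by omega)) (termNorm_nonneg hc _ _)
        hf.nonneg).trans ?_)
      nlinarith [hf.nonneg]

theorem IsRestricted.of_mul_eq_one (hc : 0 ≤ c) (hfg : f * g = 1) (hf : IsRestricted c f)
    (hf1 : GaussNormLE c (f - 1) ε) (hε : ε < 1) : IsRestricted c g := by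
  have hg1 := hf1.sub_one_of_mul_eq_one hc hfg hε
  have hε₀ := hf1.nonneg
  suffices IsRestricted c (g - 1) by
    have h : IsRestricted c (g - 1 + 1) :=
      (IsRestricted.subring c).add_mem this (isRestricted_one c)
    rwa [sub_add_cancel] at h
  have hb := isRestricted_iff_tendsto_termNorm.1
    ((IsRestricted.subring c).sub_mem hf (isRestricted_one c))
  have hsmall : ∀ η > 0, ∀ᶠ k in atTop, termNorm c (g - 1) k ≤ η := by
    intro η hη
    obtain ⟨K, hK⟩ := eventually_atTop.1 (hb.eventually (ge_mem_nhds hη))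
    -- a contraction estimate: each block of `K` further coefficients gains a factor `ε`
    have hblock (s : ℕ) : ∀ k, s * K ≤ k → termNorm c (g - 1) k ≤ max η (ε ^ s) := by
      induction s with
      | zero => exact fun k _ => (hg1 k).trans (le_max_of_le_right (by simpa using hε.le))
      | succ s ih =>
        intro k hk
        rcases termNorm_sub_one_le_of_mul_eq_one hc hfg ((hf1 0).trans_lt hε) k with
          h | ⟨i, j, hi, hij, h⟩
        · exact h.trans ((hK k (by nlinarith)).trans (le_max_left _ _))
        · refine h.trans ?_
          rcases le_or_gt K i with hiK | hiK
          · calc termNorm c (f - 1) i * termNorm c (g - 1) j ≤ η * 1 :=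
                  mul_le_mul (hK i hiK) ((hg1 j).trans hε.le) (termNorm_nonneg hc _ _) hη.le
              _ ≤ max η (ε ^ (s + 1)) := by simp
          · calc termNorm c (f - 1) i * termNorm c (g - 1) j ≤ ε * max η (ε ^ s) :=
                  mul_le_mul (hf1 i) (ih j (by nlinarith)) (termNorm_nonneg hc _ _) hε₀
              _ = max (ε * η) (ε ^ (s + 1)) := by rw [mul_max_of_nonneg _ _ hε₀, pow_succ']
              _ ≤ max η (ε ^ (s + 1)) :=
                  max_le_max (mul_le_of_le_one_left hη.le hε.le) le_rfl
    obtain ⟨s, hs⟩ := exists_pow_lt_of_lt_one hη hε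
    exact eventually_atTop.2 ⟨s * K, fun k hk => (hblock s k hk).trans (max_le le_rfl hs.le)⟩
  rw [isRestricted_iff_tendsto_termNorm, tendsto_order]
  exact ⟨fun a ha => Eventually.of_forall fun k => ha.trans_le (termNorm_nonneg hc _ k),
    fun a ha => (hsmall (a / 2) (half_pos ha)).mono fun k hk => hk.trans_lt (half_lt_self ha)⟩

variable [NormOneClass R]

theorem GaussNormLE.le_one_of_sub_one (hc : 0 ≤ c) (hf : GaussNormLE c (f - 1) ε)
    (hε : ε ≤ 1) : GaussNormLE c f 1 := by
  simpa [hε] using hf.add hc gaussNormLE_one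

theorem GaussNormLE.mul_sub_one (hc : 0 ≤ c) (hf : GaussNormLE c (f - 1) ε)
    (hg : GaussNormLE c (g - 1) ε) (hε : ε ≤ 1) : GaussNormLE c (f * g - 1) ε := by
  have h := (hf.mul hc (hg.le_one_of_sub_one hc hε)).add hc hg
  rw [mul_one, max_self] at h
  convert h using 1
  ring

theorem GaussNormLE.prod_sub_one {ι : Type*} {s : Finset ι} {G : ι → PowerSeries R}
    (hc : 0 ≤ c) (hG : ∀ i ∈ s, GaussNormLE c (G i - 1) ε) (hε₀ : 0 ≤ ε) (hε : ε ≤ 1) :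
    GaussNormLE c (∏ i ∈ s, G i - 1) ε := by
  classical
  induction s using Finset.induction_on with
  | empty => simpa using gaussNormLE_zero hε₀
  | insert i s hi ih =>
    rw [prod_insert hi]
    exact (hG i (mem_insert_self i s)).mul_sub_one hc
      (ih fun j hj => hG j (mem_insert_of_mem hj)) hε

end NormedCommRing

section NormedField

variable {K : Type*} [NormedField K] {c ε : ℝ} {f : PowerSeries K}

theorem mul_inv_cancel_of_gaussNormLE (hf : GaussNormLE c (f - 1) ε) (hε : ε < 1) :
    f * f⁻¹ = 1 := by
  refine PowerSeries.mul_inv_cancel f fun h0 => ?_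
  have := (hf 0).trans_lt hε
  simp [termNorm, h0] at this

theorem isRestrictedUnit_of_gaussNormLE [IsUltrametricDist K] (hc : 0 ≤ c) (hf : IsRestricted c f)
    (hf1 : GaussNormLE c (f - 1) ε) (hε : ε < 1) : IsRestrictedUnit c f :=
  ⟨hf, f⁻¹, hf.of_mul_eq_one hc (mul_inv_cancel_of_gaussNormLE hf1 hε) hf1 hε,
    mul_inv_cancel_of_gaussNormLE hf1 hε⟩

theorem GaussNormLE.inv_mul_sub_one [IsUltrametricDist K] {c' η : ℝ} {u P : PowerSeries K}
    (hu : GaussNormLE c (u - 1) ε) (hε : ε < 1) (hc' : 0 ≤ c') (hcc' : c' ≤ c)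
    (huP : GaussNormLE c' (u - P) η) : GaussNormLE c' (u⁻¹ * P - 1) η := by
  have hinv : u * u⁻¹ = 1 := mul_inv_cancel_of_gaussNormLE hu hε
  have hb : GaussNormLE c' u⁻¹ 1 :=
    ((hu.sub_one_of_mul_eq_one (hc'.trans hcc') hinv hε).mono hc' hcc').le_one_of_sub_one hc'
      hε.le
  have heq : u⁻¹ * P - 1 = -(u⁻¹ * (u - P)) := by linear_combination hinv
  intro k
  simpa [heq] using hb.mul hc' huP k

end NormedField

section Limits

open scoped PowerSeries.WithPiTopology

variable {R : Type*} [NormedCommRing R] {c ε : ℝ} {f : PowerSeries R}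

theorem GaussNormLE.of_tendsto {ι : Type*} {l : Filter ι} [l.NeBot] {Y : ι → PowerSeries R}
    {Z : PowerSeries R} (hY : Tendsto Y l (𝓝 Z)) (h : ∀ᶠ i in l, GaussNormLE c (Y i) ε) :
    GaussNormLE c Z ε := by
  intro k
  have hk := ((WithPiTopology.tendsto_iff_coeff_tendsto R Y l Z).1 hY k).norm.mul_const (c ^ k)
  exact le_of_tendsto hk (h.mono fun i hi => hi k)

theorem IsRestricted.of_forall_gaussNormLE_sub (hc : 0 ≤ c)
    (h : ∀ b > 0, ∃ g, IsRestricted c g ∧ GaussNormLE c (f - g) b) : IsRestricted c f := by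
  rw [isRestricted_iff_tendsto_termNorm, Metric.tendsto_atTop]
  intro e he
  obtain ⟨g, hg, hfg⟩ := h (e / 2) (half_pos he)
  obtain ⟨K, hK⟩ := Metric.tendsto_atTop.1 (isRestricted_iff_tendsto_termNorm.1 hg) (e / 2)
    (half_pos he)
  refine ⟨K, fun k hk => ?_⟩
  have hgk := hK k hk
  rw [Real.dist_eq, sub_zero, abs_of_nonneg (termNorm_nonneg hc _ _)] at hgk ⊢
  calc termNorm c f k = termNorm c ((f - g) + g) k := by rw [sub_add_cancel]
    _ ≤ termNorm c (f - g) k + termNorm c g k := by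
        rw [termNorm, termNorm, termNorm, ← add_mul, map_add]
        exact mul_le_mul_of_nonneg_right (norm_add_le _ _) (pow_nonneg hc k)
    _ < e := by linarith [hfg k]

theorem exists_tendsto_of_gaussNormLE_sub [CompleteSpace R] (hc : 0 < c)
    {Y : ℕ → PowerSeries R} (hY : ∀ b > 0, ∃ M, ∀ M' ≥ M, GaussNormLE c (Y M' - Y M) b) :
    ∃ Z, Tendsto Y atTop (𝓝 Z) := by
  have hcoeff (k : ℕ) : CauchySeq fun M => coeff k (Y M) := by
    rw [Metric.cauchySeq_iff']
    intro e he
    obtain ⟨M, hM⟩ := hY (e * c ^ k / 2) (by positivity)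
    refine ⟨M, fun M' hM' => ?_⟩
    have h := hM M' hM' k
    rw [termNorm, map_sub] at h
    rw [dist_eq_norm]
    have hck : 0 < c ^ k := pow_pos hc k
    nlinarith
  choose L hL using fun k => cauchySeq_tendsto_of_complete (hcoeff k)
  exact ⟨mk L, (WithPiTopology.tendsto_iff_coeff_tendsto R Y atTop (mk L)).2 fun k => by
    simpa using hL k⟩

variable [NormOneClass R] [IsUltrametricDist R]

theorem exists_tendsto_prod_range [CompleteSpace R] (hc : 0 < c) (hε : ε ≤ 1)
    {G : ℕ → PowerSeries R} {η : ℕ → ℝ} (hη : Tendsto η atTop (𝓝 0)) (hηε : ∀ m, η m ≤ ε)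
    (hG : ∀ m, GaussNormLE c (G m - 1) (η m)) (hGr : ∀ m, IsRestricted c (G m)) :
    ∃ Z, Tendsto (fun M => ∏ m ∈ range M, G m) atTop (𝓝 Z) ∧ IsRestricted c Z ∧
      GaussNormLE c (Z - 1) ε := by
  set Y := fun M => ∏ m ∈ range M, G m
  have hε₀ : 0 ≤ ε := (hG 0).nonneg.trans (hηε 0)
  have hY1 (M : ℕ) : GaussNormLE c (Y M - 1) ε :=
    GaussNormLE.prod_sub_one hc.le (fun m _ => (hG m).weaken (hηε m)) hε₀ hε
  have hcauchy : ∀ b > 0, ∃ M, ∀ M' ≥ M, GaussNormLE c (Y M' - Y M) b := by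
    intro b hb
    obtain ⟨M, hM⟩ := eventually_atTop.1 (hη.eventually (ge_mem_nhds (lt_min hb one_pos)))
    refine ⟨M, fun M' hM' => ?_⟩
    have hsplit : Y M' - Y M = Y M * (∏ m ∈ Ico M M', G m - 1) := by
      rw [mul_sub, mul_one, prod_range_mul_prod_Ico G hM']
    have htail : GaussNormLE c (∏ m ∈ Ico M M', G m - 1) (min b 1) :=
      GaussNormLE.prod_sub_one hc.le (fun m hm => (hG m).weaken (hM m (mem_Ico.1 hm).1))
        (le_min hb.le zero_le_one) (min_le_right _ _)
    rw [hsplit]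
    simpa using
      ((hY1 M).le_one_of_sub_one hc.le hε).mul hc.le (htail.weaken (min_le_left _ _))
  obtain ⟨Z, hZ⟩ := exists_tendsto_of_gaussNormLE_sub hc hcauchy
  refine ⟨Z, hZ, IsRestricted.of_forall_gaussNormLE_sub hc.le fun b hb => ?_,
    GaussNormLE.of_tendsto (hZ.sub_const 1) (Eventually.of_forall hY1)⟩
  obtain ⟨M, hM⟩ := hcauchy b hb
  exact ⟨Y M, IsRestricted.prod fun m _ => hGr m,
    GaussNormLE.of_tendsto (hZ.sub_const (Y M)) (eventually_ge_atTop M |>.mono hM)⟩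

end Limits

section Coboundary

open scoped PowerSeries.WithPiTopology

variable {K : Type*} [NormedField K] [IsUltrametricDist K]

theorem exists_coboundary_of_factorization [CompleteSpace K] {c : ℕ → ℝ} (hc0 : ∀ n, 0 < c n)
    {ε : ℝ} (hε : ε < 1) {u P F : ℕ → PowerSeries K} {η : ℕ → ℕ → ℝ}
    (huF : ∀ m, u m * F m = P m) (hP : ∀ n m, IsRestrictedUnit (c n) (P m))
    (hFr : ∀ n m, n ≤ m → IsRestricted (c n) (F m))
    (hF : ∀ n m, n ≤ m → GaussNormLE (c n) (F m - 1) (η n m))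
    (hηε : ∀ n m, n ≤ m → η n m ≤ ε) (hη : ∀ n, Tendsto (η n) atTop (𝓝 0)) :
    ∃ v : ℕ → PowerSeries K, (∀ n, IsRestrictedUnit (c n) (v n)) ∧ ∀ n, u n * v n = v (n + 1) := by
  choose Z hZ hZr hZ1 using fun n => exists_tendsto_prod_range (G := fun j => F (j + n))
    (hc0 n) hε.le ((tendsto_add_atTop_iff_nat n).2 (hη n)) (fun j => hηε n _ le_add_self)
    (fun j => hF n _ le_add_self) (fun j => hFr n _ le_add_self)
  have hZ_succ (n : ℕ) : Z n = Z (n + 1) * F n := by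
    refine tendsto_nhds_unique ((hZ n).comp (tendsto_add_atTop_nat 1)) ?_
    simp_rw [Function.comp_def, prod_range_succ', zero_add, add_right_comm _ 1 n]
    exact (hZ (n + 1)).mul_const (F n)
  refine ⟨fun n => (∏ m ∈ range n, P m) * Z n, fun n => ?_, fun n => ?_⟩
  · exact (IsRestrictedUnit.prod fun m _ => hP n m).mul
      (isRestrictedUnit_of_gaussNormLE (hc0 n).le (hZr n) (hZ1 n) hε)
  · dsimp only
    rw [hZ_succ, prod_range_succ, ← huF]
    ring

theorem exists_coboundary_of_gaussNormLE [CompleteSpace K] {c : ℕ → ℝ} (hc0 : ∀ n, 0 < c n)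
    (hc : StrictMono c) (hc1 : Tendsto c atTop (𝓝 1)) {ε : ℝ} (hε : ε < 1)
    {u : ℕ → PowerSeries K} (hu : ∀ n, IsRestricted (c n) (u n))
    (hu1 : ∀ n, GaussNormLE (c n) (u n - 1) ε) :
    ∃ v : ℕ → PowerSeries K, (∀ n, IsRestrictedUnit (c n) (v n)) ∧ ∀ n, u n * v n = v (n + 1) := by
  have hc_le_one (n : ℕ) : c n ≤ 1 := hc.monotone.ge_of_tendsto hc1 n
  obtain ⟨θ, hεθ, hθ⟩ := exists_between hε
  have hθ0 : 0 < θ := (hu1 0).nonneg.trans_lt hεθ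
  obtain ⟨D, hD, hDθ⟩ := exists_tendsto_atTop_le_pow hc1 hθ
  set P : ℕ → PowerSeries K := fun m => 1 + (trunc (D m + 1) (u m - 1) : PowerSeries K)
  have hinv (m : ℕ) : u m * (u m)⁻¹ = 1 := mul_inv_cancel_of_gaussNormLE (hu1 m) hε
  have hP (n m : ℕ) : IsRestrictedUnit (c n) (P m) := by
    refine isRestrictedUnit_of_gaussNormLE (hc0 n).le
      ((IsRestricted.subring _).add_mem (isRestricted_one _) (isRestricted_coe _ _)) ?_
      ((div_lt_one hθ0).2 hεθ)
    simpa [P] using ((hu1 m).trunc_of_le_pow (hc0 m).le (hc_le_one m) hθ0 (hDθ m)).mono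
      (hc0 n).le (hc_le_one n)
  have hFr (n m : ℕ) (hnm : n ≤ m) : IsRestricted (c n) ((u m)⁻¹ * P m) :=
    isRestricted.mul _ (((hu m).of_mul_eq_one (hc0 m).le (hinv m) (hu1 m) hε).mono (hc0 n).le
      (hc.monotone hnm)) (hP n m).1
  have hF (n m : ℕ) (hnm : n ≤ m) :
      GaussNormLE (c n) ((u m)⁻¹ * P m - 1) (ε * (c n / c m) ^ (D m + 1)) := by
    refine (hu1 m).inv_mul_sub_one hε (hc0 n).le (hc.monotone hnm) ?_
    have hsub : u m - P m = u m - 1 - (trunc (D m + 1) (u m - 1) : PowerSeries K) := by ring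
    rw [hsub]
    exact (hu1 m).sub_trunc (hc0 m) (hc0 n).le (hc.monotone hnm) _
  refine exists_coboundary_of_factorization hc0 hε (fun m => ?_) hP hFr hF (fun n m hnm => ?_)
    (fun n => ?_)
  · rw [← mul_assoc, hinv, one_mul]
  · exact mul_le_of_le_one_right (hu1 0).nonneg (pow_le_one₀
      (div_nonneg (hc0 n).le (hc0 m).le) ((div_le_one (hc0 m)).2 (hc.monotone hnm)))
  · simpa using (tendsto_div_pow_atTop_nhds_zero hc0 hc
      (tendsto_atTop_mono (fun m => (D m).le_succ) hD) n).const_mul ε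

end Coboundary

end PowerSeries

theorem termNorm_natCast_rpow {K : Type*} [NormedField K] (p : ℕ) (r : ℝ) (f : PowerSeries K)
    (k : ℕ) : PowerSeries.termNorm ((p : ℝ) ^ (-r)) f k =
      ‖PowerSeries.coeff k f‖ * (p : ℝ) ^ (-r * k) := by
  rw [PowerSeries.termNorm, Real.rpow_mul (Nat.cast_nonneg p), Real.rpow_natCast]

theorem memTate_iff_isRestricted {K : Type*} [NormedField K] (p : ℕ) (r : ℚ)
    (f : PowerSeries K) : MemTate p r f ↔ PowerSeries.IsRestricted ((p : ℝ) ^ (-(r : ℝ))) f := by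
  rw [PowerSeries.isRestricted_iff_tendsto_termNorm, funext (termNorm_natCast_rpow p r f)]
  rfl

theorem isTateUnit_iff_isRestrictedUnit {K : Type*} [NormedField K] (p : ℕ) (r : ℚ)
    (f : PowerSeries K) :
    IsTateUnit p r f ↔ PowerSeries.IsRestrictedUnit ((p : ℝ) ^ (-(r : ℝ))) f := by
  simp only [IsTateUnit, PowerSeries.IsRestrictedUnit, memTate_iff_isRestricted]

open PowerSeries in
theorem picard_class_of_small_units_trivial_general (p : ℕ) (hp : p.Prime)
    (C : Type*) [NontriviallyNormedField C] [CompleteSpace C]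
    [IsUltrametricDist C]
    (r : ℕ → ℚ) (hr_anti : StrictAnti r)
    (hr_lim : Tendsto (fun n => ((r n : ℝ))) atTop (𝓝 0))
    (u : ℕ → PowerSeries C)
    (hu : ∀ n, IsTateUnit p (r n) (u n))
    (hδ : ∃ δ : ℝ, 0 < δ ∧ ∃ N : ℕ, ∀ n ≥ N,
      PowerSeries.coeff 0 (u n) = 1 ∧
      ∀ k : ℕ, 1 ≤ k →
        ‖PowerSeries.coeff k (u n)‖ * (p : ℝ) ^ (-(r n : ℝ) * k) ≤ (p : ℝ) ^ (-δ)) :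
    ∃ v : ℕ → PowerSeries C,
      (∀ n, IsTateUnit p (r n) (v n)) ∧ ∀ n, u n * v n = v (n + 1) := by
  obtain ⟨δ, hδ, N, hN⟩ := hδ
  have hp1 : (1 : ℝ) < p := by exact_mod_cast hp.one_lt
  set c : ℕ → ℝ := fun n => (p : ℝ) ^ (-(r n : ℝ))
  have hc0 (n : ℕ) : 0 < c n := Real.rpow_pos_of_pos (zero_lt_one.trans hp1) _
  have hc : StrictMono c := fun m n hmn =>
    Real.rpow_lt_rpow_of_exponent_lt hp1 (neg_lt_neg (by exact_mod_cast hr_anti hmn))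
  have hc1 : Tendsto c atTop (𝓝 1) := by
    simpa [Function.comp_def] using
      ((Real.continuous_const_rpow (zero_lt_one.trans hp1).ne').tendsto 0).comp
        (by simpa using hr_lim.neg)
  have hunit (n : ℕ) : IsRestrictedUnit (c n) (u n) := (isTateUnit_iff_isRestrictedUnit ..).1 (hu n)
  have hsmall (n : ℕ) : GaussNormLE (c (n + N)) (u (n + N) - 1) ((p : ℝ) ^ (-δ)) :=
    gaussNormLE_sub_one_of_coeff_zero_eq_one (hN _ le_add_self).1
      (fun k hk => (termNorm_natCast_rpow ..).trans_le ((hN _ le_add_self).2 k hk))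
      (Real.rpow_nonneg (Nat.cast_nonneg p) _)
  obtain ⟨w, hw, huw⟩ := exists_coboundary_of_gaussNormLE (fun n => hc0 (n + N))
    (hc.comp (strictMono_id.add_const N)) (hc1.comp (tendsto_add_atTop_nat N))
    (Real.rpow_lt_one_of_one_lt_of_neg hp1 (neg_neg_of_pos hδ)) (fun n => (hunit _).1) hsmall
  obtain ⟨v, hv, huv⟩ := exists_coboundary_of_shift (fun n => (hc0 n).le) hc.monotone hunit N hw huw
  exact ⟨v, fun n => (isTateUnit_iff_isRestrictedUnit ..).2 (hv n), huv⟩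

theorem picard_class_of_small_units_trivial (p : ℕ) (hp : p.Prime)
    (C : Type*) [NontriviallyNormedField C] [IsAlgClosed C] [CompleteSpace C]
    [IsUltrametricDist C]
    (hnorm : ‖(p : C)‖ = (p : ℝ)⁻¹)
    (hval : ∀ x : C, x ≠ 0 → ∃ q : ℚ, ‖x‖ = (p : ℝ) ^ (-(q : ℝ)))
    (hval' : ∀ q : ℚ, ∃ x : C, x ≠ 0 ∧ ‖x‖ = (p : ℝ) ^ (-(q : ℝ)))
    (r : ℕ → ℚ) (hr_pos : ∀ n, 0 < r n) (hr_anti : StrictAnti r)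
    (hr_lim : Tendsto (fun n => ((r n : ℝ))) atTop (𝓝 0))
    (u : ℕ → PowerSeries C)
    (hu : ∀ n, IsTateUnit p (r n) (u n))
    (hδ : ∃ δ : ℝ, 0 < δ ∧ ∃ N : ℕ, ∀ n ≥ N,
      PowerSeries.coeff 0 (u n) = 1 ∧
      ∀ k : ℕ, 1 ≤ k →
        ‖PowerSeries.coeff k (u n)‖ * (p : ℝ) ^ (-(r n : ℝ) * k) ≤ (p : ℝ) ^ (-δ)) :
    ∃ v : ℕ → PowerSeries C,
      (∀ n, IsTateUnit p (r n) (v n)) ∧ ∀ n, u n * v n = v (n + 1) :=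
  picard_class_of_small_units_trivial_general p hp C r hr_anti hr_lim u hu hδ
end
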